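/- arXiv:1602.05895 — 6 statements merged into one kernel-verified Lean document; each statement's English description precedes it below -/
import Mathlib

section
/- Let f : ℝ → [0, ∞) be continuous with compact support, and define the one-sided maximal function (M_R f)(x) = sup_{b > x} (1/(b - x)) ∫_x^b f(t) dt. Then for every t > 0, t · |{x : M_R f(x) > t}| = ∫_{{x : M_R f(x) > t}} f(s) ds. -/
open MeasureTheory

open Set Filter Topology in
/-- Key pointwise lemma: on a component `(a,b)` of the shadow set, `g a = g b`. -/
lemma risingSun_comp_eq {g : ℝ → ℝ} (hg : Continuous g) {a b : ℝ} (hab : a < b)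
    (hsub : ∀ x ∈ Set.Ioo a b, ∃ y, x < y ∧ g x < g y)
    (ha : ∀ y, a < y → g y ≤ g a) (hb : ∀ y, b < y → g y ≤ g b) : g a = g b := by
  have key : ∀ x ∈ Set.Ioo a b, g x ≤ g b := by
    rintro x ⟨hax, hxb⟩
    by_contra hgx
    push_neg at hgx
    set K : Set ℝ := Set.Icc x b ∩ g ⁻¹' Set.Ici (g x) with hK
    have hxK : x ∈ K := ⟨⟨le_refl x, hxb.le⟩, le_refl (g x)⟩
    have hKcomp : IsCompact K := isCompact_Icc.inter_right (isClosed_Ici.preimage hg)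
    have hcK : sSup K ∈ K := hKcomp.sSup_mem ⟨x, hxK⟩
    set c := sSup K with hc
    have hcb : c ≤ b := hcK.1.2
    have hxc : x ≤ c := hcK.1.1
    have hgxc : g x ≤ g c := hcK.2
    have hcltb : c < b := by
      rcases lt_or_eq_of_le hcb with h | h
      · exact h
      · exfalso; rw [h] at hgxc; linarith
    obtain ⟨d, hcd, hgcd⟩ := hsub c ⟨lt_of_lt_of_le hax hxc, hcltb⟩
    rcases le_or_gt d b with hdb | hbd
    · have hdK : d ∈ K := ⟨⟨hxc.trans hcd.le, hdb⟩, le_of_lt (lt_of_le_of_lt hgxc hgcd)⟩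
      have := le_csSup hKcomp.bddAbove hdK
      linarith
    · have := hb d hbd
      linarith
  have h1 : g a ≤ g b := by
    have htend : Filter.Tendsto g (𝓝[>] a) (𝓝 (g a)) :=
      (hg.tendsto a).mono_left nhdsWithin_le_nhds
    refine le_of_tendsto htend ?_
    filter_upwards [Ioo_mem_nhdsGT hab] with x hx using key x hx
  have h2 : g b ≤ g a := ha b hab
  linarith

/-- The one-sided (rising sun) maximal function
`M_R f(x) = sup_{b > x} (1/(b-x)) ∫_x^b f`. -/
noncomputable def risingSunMax (f : ℝ → ℝ) (x : ℝ) : ℝ :=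
  ⨆ b : {b : ℝ // x < b}, (1 / ((b : ℝ) - x)) * ∫ t in x..(b : ℝ), f t

open Set Filter Topology in
/-- Rising sun identity: for continuous, compactly supported `f ≥ 0` and `t > 0`,
`t · |{M_R f > t}| = ∫_{{M_R f > t}} f`. -/
theorem stmt_4 (f : ℝ → ℝ) (hcont : Continuous f) (hpos : ∀ x, 0 ≤ f x)
    (hsupp : HasCompactSupport f) (t : ℝ) (ht : 0 < t) :
    t * (volume {x | t < risingSunMax f x}).toReal
      = ∫ x in {x | t < risingSunMax f x}, f x := by
  have hint : ∀ a b : ℝ, IntervalIntegrable f volume a b := fun a b =>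
    hcont.intervalIntegrable a b
  set G : ℝ → ℝ := fun x => ∫ s in (0:ℝ)..x, f s with hGdef
  set g : ℝ → ℝ := fun x => G x - t * x with hgdef
  have hGcont : Continuous G := intervalIntegral.continuous_primitive hint 0
  have hgcont : Continuous g := hGcont.sub (continuous_const.mul continuous_id)
  have hgdiff : ∀ x b : ℝ, g b - g x = (∫ s in x..b, f s) - t * (b - x) := by
    intro x b
    have h := intervalIntegral.integral_interval_sub_left (hint 0 b) (hint 0 x)
    simp only [hgdef, hGdef]
    linarith [h]
  set E : Set ℝ := {x : ℝ | ∃ b, x < b ∧ g x < g b} with hEdef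
  -- bound on f
  obtain ⟨Cf, hCf⟩ : ∃ Cf, ∀ y, ‖f y‖ ≤ Cf := hsupp.exists_bound_of_continuous hcont
  -- the set identification
  have hEeq : {x | t < risingSunMax f x} = E := by
    ext x
    simp only [Set.mem_setOf_eq, risingSunMax, hEdef]
    haveI : Nonempty {b : ℝ // x < b} := ⟨⟨x + 1, by linarith⟩⟩
    have havg : ∀ b : ℝ, x < b →
        (t < (1 / (b - x)) * ∫ s in x..b, f s ↔ g x < g b) := by
      intro b hb
      have hbx : (0:ℝ) < b - x := by linarith
      have h1 : (1 / (b - x)) * (∫ s in x..b, f s) = (∫ s in x..b, f s) / (b - x) := by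
        ring
      rw [h1, lt_div_iff₀ hbx]
      have h2 := hgdiff x b
      constructor <;> intro h <;> linarith
    have hbdd : BddAbove (Set.range fun b : {b : ℝ // x < b} =>
        (1 / ((b : ℝ) - x)) * ∫ s in x..(b : ℝ), f s) := by
      refine ⟨Cf, ?_⟩
      rintro _ ⟨⟨b, hb⟩, rfl⟩
      have hbx : (0:ℝ) < b - x := by linarith
      have hIle : (∫ s in x..b, f s) ≤ Cf * (b - x) := by
        calc (∫ s in x..b, f s) ≤ ∫ s in x..b, Cf :=
              intervalIntegral.integral_mono_on (le_of_lt hb) (hint x b)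
                intervalIntegrable_const
                (fun y _ => (le_abs_self _).trans (Real.norm_eq_abs (f y) ▸ hCf y))
          _ = Cf * (b - x) := by simp [mul_comm]
      calc (1 / (b - x)) * ∫ s in x..b, f s ≤ (1 / (b - x)) * (Cf * (b - x)) := by
            apply mul_le_mul_of_nonneg_left hIle (by positivity)
        _ = Cf := by field_simp
    rw [lt_ciSup_iff hbdd]
    constructor
    · rintro ⟨⟨b, hb⟩, h⟩
      exact ⟨b, hb, (havg b hb).mp h⟩
    · rintro ⟨b, hb, h⟩
      exact ⟨⟨b, hb⟩, (havg b hb).mpr h⟩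
  rw [hEeq]
  have hEopen : IsOpen E := by
    have : E = ⋃ b : ℝ, (Set.Iio b ∩ g ⁻¹' Set.Iio (g b)) := by
      ext x
      simp only [hEdef, Set.mem_setOf_eq, Set.mem_iUnion, Set.mem_inter_iff,
        Set.mem_Iio, Set.mem_preimage]
    rw [this]
    exact isOpen_iUnion fun b => isOpen_Iio.inter (isOpen_Iio.preimage hgcont)
  -- support bound
  obtain ⟨r, hr⟩ := hsupp.isBounded.subset_closedBall (0 : ℝ)
  set M : ℝ := |r| + 1 with hMdef
  have hM : ∀ y : ℝ, y ≤ -M ∨ M ≤ y → f y = 0 := by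
    intro y hy
    apply image_eq_zero_of_notMem_tsupport
    intro hmem
    have := hr hmem
    rw [Real.closedBall_eq_Icc] at this
    have h1 : -r ≤ y := by simpa using this.1
    have h2 : y ≤ r := by simpa using this.2
    have := abs_nonneg r
    rcases hy with hy | hy
    · simp only [hMdef] at hy; nlinarith [le_abs_self r]
    · simp only [hMdef] at hy; nlinarith [le_abs_self r]
  have hzero_right : ∀ a b : ℝ, M ≤ a → a ≤ b → (∫ s in a..b, f s) = 0 := by
    intro a b hMa hab
    rw [intervalIntegral.integral_congr (g := fun _ => (0:ℝ)) ?_,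
      intervalIntegral.integral_zero]
    intro y hy
    rw [Set.uIcc_of_le hab] at hy
    exact hM y (Or.inr (hMa.trans hy.1))
  have hzero_left : ∀ a b : ℝ, b ≤ -M → a ≤ b → (∫ s in a..b, f s) = 0 := by
    intro a b hbM hab
    rw [intervalIntegral.integral_congr (g := fun _ => (0:ℝ)) ?_,
      intervalIntegral.integral_zero]
    intro y hy
    rw [Set.uIcc_of_le hab] at hy
    exact hM y (Or.inl (hy.2.trans hbM))
  set I : ℝ := ∫ s in (-M)..M, f s with hIdef
  have hbound : ∀ x b : ℝ, x ≤ b → (∫ s in x..b, f s) ≤ I := by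
    intro x b hxb
    set c := min x (-M) with hc
    set d := max b M with hd
    have hcx : c ≤ x := min_le_left _ _
    have hbd : b ≤ d := le_max_left _ _
    have hcM : c ≤ -M := min_le_right _ _
    have hMd : M ≤ d := le_max_right _ _
    have h1 : (∫ s in c..x, f s) + ∫ s in x..b, f s = ∫ s in c..b, f s :=
      intervalIntegral.integral_add_adjacent_intervals (hint c x) (hint x b)
    have h2 : (∫ s in c..b, f s) + ∫ s in b..d, f s = ∫ s in c..d, f s :=
      intervalIntegral.integral_add_adjacent_intervals (hint c b) (hint b d)
    have h3 : (∫ s in c..(-M), f s) + ∫ s in (-M)..d, f s = ∫ s in c..d, f s :=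
      intervalIntegral.integral_add_adjacent_intervals (hint c (-M)) (hint (-M) d)
    have h4 : (∫ s in (-M)..M, f s) + ∫ s in M..d, f s = ∫ s in (-M)..d, f s :=
      intervalIntegral.integral_add_adjacent_intervals (hint (-M) M) (hint M d)
    have hnn1 : 0 ≤ ∫ s in c..x, f s :=
      intervalIntegral.integral_nonneg hcx (fun u _ => hpos u)
    have hnn2 : 0 ≤ ∫ s in b..d, f s :=
      intervalIntegral.integral_nonneg hbd (fun u _ => hpos u)
    have hz1 : (∫ s in c..(-M), f s) = 0 := hzero_left c (-M) le_rfl hcM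
    have hz2 : (∫ s in M..d, f s) = 0 := hzero_right M d le_rfl hMd
    simp only [hIdef]
    linarith
  have hI0 : 0 ≤ I :=
    intervalIntegral.integral_nonneg (by nlinarith [abs_nonneg r]) (fun u _ => hpos u)
  set R : ℝ := M + I / t + 1 with hRdef
  have hM0 : 0 < M := by positivity
  have hMR : M < R := by
    have : 0 ≤ I / t := div_nonneg hI0 ht.le
    simp only [hRdef]; linarith
  have hnotE_right : ∀ x : ℝ, M ≤ x → x ∉ E := by
    intro x hx hxE
    obtain ⟨b, hxb, hgb⟩ := hxE
    have hd := hgdiff x b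
    have h0 := hzero_right x b hx hxb.le
    have : 0 < t * (b - x) := mul_pos ht (by linarith)
    linarith
  have hnotE_left : ∀ x : ℝ, x ≤ -R → x ∉ E := by
    intro x hx hxE
    obtain ⟨b, hxb, hgb⟩ := hxE
    have hd := hgdiff x b
    rcases le_or_gt b (-M) with hbM | hbM
    · have h0 := hzero_left x b hbM hxb.le
      have : 0 < t * (b - x) := mul_pos ht (by linarith)
      linarith
    · have h1 := hbound x b hxb.le
      have hIt : t * (I / t + 1) = I + t := by field_simp
      have h2 : I / t + 1 ≤ -M - x := by simp only [hRdef] at hx; linarith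
      have h3 : t * (I / t + 1) ≤ t * (-M - x) := mul_le_mul_of_nonneg_left h2 ht.le
      have h4 : t * (-M - x) ≤ t * (b - x) := mul_le_mul_of_nonneg_left (by linarith) ht.le
      nlinarith [hd, h1, hIt, h3, h4, ht, hgb]
  have hER : E ⊆ Set.Ioo (-R) R := by
    intro x hx
    constructor
    · by_contra h
      push_neg at h
      exact hnotE_left x h hx
    · by_contra h
      push_neg at h
      exact hnotE_right x (hMR.le.trans h) hx
  -- components
  set 𝒞 : Set (Set ℝ) := connectedComponentIn E '' E with h𝒞def
  have h𝒞sub : ∀ C ∈ 𝒞, C ⊆ E := by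
    rintro _ ⟨x, hx, rfl⟩
    exact connectedComponentIn_subset E x
  have h𝒞eq : ∀ C ∈ 𝒞, ∀ z ∈ C, C = connectedComponentIn E z := by
    rintro _ ⟨x, hx, rfl⟩ z hz
    exact connectedComponentIn_eq hz
  have h𝒞disj : 𝒞.PairwiseDisjoint id := by
    intro C₁ h₁ C₂ h₂ hne
    simp only [Function.onFun, id_eq]
    rw [Set.disjoint_left]
    intro z hz₁ hz₂
    exact hne ((h𝒞eq C₁ h₁ z hz₁).trans (h𝒞eq C₂ h₂ z hz₂).symm)
  have h𝒞union : ⋃₀ 𝒞 = E := by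
    apply Set.Subset.antisymm
    · exact Set.sUnion_subset h𝒞sub
    · intro x hx
      exact ⟨connectedComponentIn E x, ⟨x, hx, rfl⟩, mem_connectedComponentIn hx⟩
  have hcomp : ∀ C ∈ 𝒞, ∃ a b : ℝ, a < b ∧ C = Set.Ioo a b ∧ g a = g b := by
    rintro C hC
    obtain ⟨x, hxE, rfl⟩ := hC
    set C := connectedComponentIn E x with hCdef
    have hCopen : IsOpen C := hEopen.connectedComponentIn
    have hxC : x ∈ C := mem_connectedComponentIn hxE
    have hCsub : C ⊆ E := connectedComponentIn_subset E x
    have hCbddA : BddAbove C := ⟨R, fun y hy => ((hER (hCsub hy)).2).le⟩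
    have hCbddB : BddBelow C := ⟨-R, fun y hy => ((hER (hCsub hy)).1).le⟩
    set a := sInf C with hadef
    set b := sSup C with hbdef
    have hax : a ≤ x := csInf_le hCbddB hxC
    have hxb : x ≤ b := le_csSup hCbddA hxC
    have hbC : b ∉ C := by
      intro hbC
      obtain ⟨ε, hε, hball⟩ := Metric.isOpen_iff.mp hCopen b hbC
      have : b + ε / 2 ∈ C := by
        apply hball
        rw [Metric.mem_ball, Real.dist_eq, show b + ε / 2 - b = ε / 2 by ring,
          abs_of_nonneg (by linarith)]
        linarith
      have := le_csSup hCbddA this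
      linarith
    have haC : a ∉ C := by
      intro haC
      obtain ⟨ε, hε, hball⟩ := Metric.isOpen_iff.mp hCopen a haC
      have : a - ε / 2 ∈ C := by
        apply hball
        rw [Metric.mem_ball, Real.dist_eq, show a - ε / 2 - a = -(ε / 2) by ring,
          abs_neg, abs_of_nonneg (by linarith)]
        linarith
      have := csInf_le hCbddB this
      linarith
    have hax' : a < x := lt_of_le_of_ne hax (fun h => haC (h ▸ hxC))
    have hxb' : x < b := lt_of_le_of_ne hxb (fun h => hbC (h ▸ hxC))
    have hab : a < b := hax'.trans hxb'
    have hOC : Set.OrdConnected C :=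
      (isPreconnected_connectedComponentIn (x := x) (F := E)).ordConnected
    have hCIoo : C = Set.Ioo a b := by
      apply Set.Subset.antisymm
      · intro y hy
        have h1 : a ≤ y := csInf_le hCbddB hy
        have h2 : y ≤ b := le_csSup hCbddA hy
        exact ⟨lt_of_le_of_ne h1 (fun h => haC (h ▸ hy)),
          lt_of_le_of_ne h2 (fun h => hbC (h.symm ▸ hy))⟩
      · intro z hz
        obtain ⟨u, huC, huz⟩ := (csInf_lt_iff hCbddB ⟨x, hxC⟩).mp hz.1
        obtain ⟨v, hvC, hzv⟩ := (lt_csSup_iff hCbddA ⟨x, hxC⟩).mp hz.2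
        exact hOC.out huC hvC ⟨huz.le, hzv.le⟩
    have hbndry : ∀ w : ℝ, w ∉ Set.Ioo a b → w ∈ E →
        (∃ y ∈ Set.Ioo a b, y ∈ connectedComponentIn E w) → False := by
      rintro w hwIoo hwE ⟨y, hyIoo, hyC'⟩
      have h1 : connectedComponentIn E w = connectedComponentIn E y :=
        connectedComponentIn_eq hyC'
      have hyC : y ∈ C := hCIoo ▸ hyIoo
      have h2 : C = connectedComponentIn E y := connectedComponentIn_eq hyC
      have : w ∈ C := by
        rw [h2, ← h1]
        exact mem_connectedComponentIn hwE
      rw [hCIoo] at this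
      exact hwIoo this
    have haE : a ∉ E := by
      intro haE
      obtain ⟨ε, hε, hball⟩ := Metric.isOpen_iff.mp hEopen.connectedComponentIn a
        (mem_connectedComponentIn haE)
      set y := a + min ε (b - a) / 2 with hydef
      have hy1 : 0 < min ε (b - a) := lt_min hε (by linarith)
      have hyIoo : y ∈ Set.Ioo a b := by
        constructor
        · simp only [hydef]; linarith
        · have := min_le_right ε (b - a)
          simp only [hydef]; linarith
      refine hbndry a (by simp) haE ⟨y, hyIoo, hball ?_⟩
      have := min_le_left ε (b - a)
      rw [Metric.mem_ball, Real.dist_eq, hydef,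
        show a + min ε (b - a) / 2 - a = min ε (b - a) / 2 by ring,
        abs_of_nonneg (by linarith)]
      linarith
    have hbE : b ∉ E := by
      intro hbE
      obtain ⟨ε, hε, hball⟩ := Metric.isOpen_iff.mp hEopen.connectedComponentIn b
        (mem_connectedComponentIn hbE)
      set y := b - min ε (b - a) / 2 with hydef
      have hy1 : 0 < min ε (b - a) := lt_min hε (by linarith)
      have hyIoo : y ∈ Set.Ioo a b := by
        constructor
        · have := min_le_right ε (b - a)
          simp only [hydef]; linarith
        · simp only [hydef]; linarith
      refine hbndry b (by simp) hbE ⟨y, hyIoo, hball ?_⟩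
      have := min_le_left ε (b - a)
      rw [Metric.mem_ball, Real.dist_eq, hydef,
        show b - min ε (b - a) / 2 - b = -(min ε (b - a) / 2) by ring,
        abs_neg, abs_of_nonneg (by linarith)]
      linarith
    have hgab : g a = g b := by
      apply risingSun_comp_eq hgcont hab
      · intro z hz
        have : z ∈ E := hCsub (hCIoo ▸ hz)
        exact this
      · intro y hy
        by_contra h
        push_neg at h
        exact haE ⟨y, hy, h⟩
      · intro y hy
        by_contra h
        push_neg at h
        exact hbE ⟨y, hy, h⟩
    exact ⟨a, b, hab, hCIoo, hgab⟩
  -- countability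
  have h𝒞count : 𝒞.Countable := by
    apply h𝒞disj.countable_of_isOpen
    · rintro C hC
      obtain ⟨a, b, hab, hCIoo, _⟩ := hcomp C hC
      rw [hCIoo]; exact isOpen_Ioo
    · rintro C hC
      obtain ⟨a, b, hab, hCIoo, _⟩ := hcomp C hC
      rw [hCIoo]; exact Set.nonempty_Ioo.mpr hab
  haveI : Countable ↥𝒞 := h𝒞count.to_subtype
  have hiU : E = ⋃ C : ↥𝒞, (C : Set ℝ) := by
    conv_lhs => rw [← h𝒞union]
    exact Set.sUnion_eq_iUnion
  have hmeasC : ∀ C : ↥𝒞, MeasurableSet (C : Set ℝ) := by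
    rintro ⟨C, hC⟩
    show MeasurableSet C
    obtain ⟨a, b, hab, hCIoo, _⟩ := hcomp C hC
    rw [hCIoo]; exact measurableSet_Ioo
  have hpdisj : Pairwise (Function.onFun Disjoint fun C : ↥𝒞 => (C : Set ℝ)) := by
    intro C₁ C₂ hne
    exact h𝒞disj C₁.2 C₂.2 (fun h => hne (Subtype.ext h))
  have hEfin : volume E ≠ ⊤ := by
    refine ((measure_mono hER).trans_lt ?_).ne
    rw [Real.volume_Ioo]
    exact ENNReal.ofReal_lt_top
  have hCfin : ∀ C : ↥𝒞, volume (C : Set ℝ) ≠ ⊤ := fun C =>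
    ((measure_mono (h𝒞sub C C.2)).trans_lt (lt_of_le_of_ne le_top hEfin)).ne
  have hvol : volume E = ∑' C : ↥𝒞, volume (C : Set ℝ) := by
    rw [hiU]; exact measure_iUnion hpdisj hmeasC
  have hintE : IntegrableOn f E volume := by
    apply (hcont.integrableOn_Icc (a := -R) (b := R)).mono_set
    exact hER.trans Set.Ioo_subset_Icc_self
  have hisum : ∫ x in E, f x = ∑' C : ↥𝒞, ∫ x in (C : Set ℝ), f x := by
    rw [hiU]
    exact integral_iUnion hmeasC hpdisj (hiU ▸ hintE)
  have hterm : ∀ C : ↥𝒞, t * (volume (C : Set ℝ)).toReal = ∫ x in (C : Set ℝ), f x := by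
    rintro ⟨C, hC⟩
    show t * (volume C).toReal = ∫ x in C, f x
    obtain ⟨a, b, hab, hCIoo, hgab⟩ := hcomp C hC
    have hd := hgdiff a b
    have hIab : (∫ s in a..b, f s) = t * (b - a) := by
      rw [hgab] at hd; linarith
    simp only [hCIoo]
    rw [Real.volume_Ioo, ENNReal.toReal_ofReal (by linarith)]
    rw [← integral_Ioc_eq_integral_Ioo, ← intervalIntegral.integral_of_le hab.le, hIab]
  calc t * (volume E).toReal
      = t * ∑' C : ↥𝒞, (volume (C : Set ℝ)).toReal := by
        rw [hvol, ENNReal.tsum_toReal_eq hCfin]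
    _ = ∑' C : ↥𝒞, t * (volume (C : Set ℝ)).toReal := by rw [tsum_mul_left]
    _ = ∑' C : ↥𝒞, ∫ x in (C : Set ℝ), f x := tsum_congr hterm
    _ = ∫ x in E, f x := hisum.symm
end

section
/- Let f : ℝ → [0, ∞) be in L^p(ℝ) for some p > 1, continuous with compact support, and let M_R f(x) = sup_{b > x} (1/(b-x)) ∫_x^b f. Then (1/p) ‖M_R f‖_p^p = (1/(p-1)) ∫_ℝ f(x) (M_R f(x))^{p-1} dx. -/
/-!
Write `G y = ∫₀ʸ f - t y`. Then `t < M_R f x` exactly when `G` rises somewhere to the right of `x`,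
so `{M_R f > t}` is the set of points shaded by Riesz's rising sun. It is a bounded open set, and on
each of its component intervals `(a, b)` the rising sun lemma gives `G a = G b`, i.e.
`∫ₐᵇ f = t (b - a)`. Summing over components, `∫_{M_R f > t} f = t |{M_R f > t}|`.

Multiplying by `t^{p-2}` and integrating over `t > 0`, the layer cake formula turns the left side into
`(1/(p-1)) ∫ f (M_R f)^{p-1}` (layer cake for the measure `f dx` and exponent `p - 1`) and the right
side into `(1/p) ∫ (M_R f)^p`.
-/

open MeasureTheory

open Set Filter Topology

theorem MeasureTheory.Measure.eq_of_forall_connectedComponentIn {X : Type*} [TopologicalSpace X]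
    [LocallyConnectedSpace X] [TopologicalSpace.SeparableSpace X] [MeasurableSpace X]
    [OpensMeasurableSpace X] {μ ν : Measure X} {U : Set X} (hU : IsOpen U)
    (h : ∀ x ∈ U, μ (connectedComponentIn U x) = ν (connectedComponentIn U x)) : μ U = ν U := by
  set C := connectedComponentIn U '' U
  have hUC : U = ⋃₀ C := by
    ext z
    refine ⟨fun hz => ⟨_, ⟨z, hz, rfl⟩, mem_connectedComponentIn hz⟩, ?_⟩
    rintro ⟨_, ⟨x, -, rfl⟩, hz⟩
    exact connectedComponentIn_subset U x hz
  have hopen : ∀ s ∈ C, IsOpen s := by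
    rintro _ ⟨x, -, rfl⟩
    exact hU.connectedComponentIn
  have hdisj : C.PairwiseDisjoint id := by
    rintro _ ⟨x, -, rfl⟩ _ ⟨y, -, rfl⟩ hxy
    exact Set.disjoint_left.2 fun z hzx hzy =>
      hxy ((connectedComponentIn_eq hzx).trans (connectedComponentIn_eq hzy).symm)
  have hcount : C.Countable := hdisj.countable_of_isOpen hopen <| by
    rintro _ ⟨x, hx, rfl⟩
    exact ⟨x, mem_connectedComponentIn hx⟩
  have hmeas : ∀ s ∈ C, MeasurableSet s := fun s hs => (hopen s hs).measurableSet
  rw [hUC, measure_sUnion hcount hdisj hmeas, measure_sUnion hcount hdisj hmeas]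
  refine tsum_congr ?_
  rintro ⟨_, x, hx, rfl⟩
  exact h x hx

theorem IsOpen.exists_connectedComponentIn_eq_Ioo {U : Set ℝ} (hU : IsOpen U)
    (hbdd : Bornology.IsBounded U) {x : ℝ} (hx : x ∈ U) :
    ∃ a b, connectedComponentIn U x = Ioo a b ∧ a ∉ U ∧ b ∉ U := by
  set S := connectedComponentIn U x
  have hSU : S ⊆ U := connectedComponentIn_subset U x
  have hxS : x ∈ S := mem_connectedComponentIn hx
  have hSbdd : Bornology.IsBounded S := hbdd.subset hSU
  have hSeq : S = Ioo (sInf S) (sSup S) := by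
    refine Subset.antisymm ?_ <|
      (isConnected_connectedComponentIn_iff.2 hx).Ioo_csInf_csSup_subset hSbdd.bddBelow
        hSbdd.bddAbove
    rw [← interior_Icc]
    exact hU.connectedComponentIn.subset_interior_iff.2 <|
      subset_Icc_csInf_csSup hSbdd.bddBelow hSbdd.bddAbove
  obtain ⟨a, b, hSab⟩ : ∃ a b, S = Ioo a b := ⟨_, _, hSeq⟩
  rw [hSab] at hxS hSU
  refine ⟨a, b, hSab, fun ha => ?_, fun hb => ?_⟩
  · have hIco : Ico a b ⊆ S := by
      refine isPreconnected_Ico.subset_connectedComponentIn ⟨hxS.1.le, hxS.2⟩ fun y hy => ?_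
      rcases hy.1.eq_or_lt with rfl | hay
      · exact ha
      · exact hSU ⟨hay, hy.2⟩
    exact lt_irrefl a (hSab ▸ hIco ⟨le_rfl, hxS.1.trans hxS.2⟩).1
  · have hIoc : Ioc a b ⊆ S := by
      refine isPreconnected_Ioc.subset_connectedComponentIn ⟨hxS.1, hxS.2.le⟩ fun y hy => ?_
      rcases hy.2.eq_or_lt with rfl | hyb
      · exact hb
      · exact hSU ⟨hy.1, hyb⟩
    exact lt_irrefl b (hSab ▸ hIoc ⟨hxS.1.trans hxS.2, le_rfl⟩).2

/-- In Riesz's picture: the points left in shadow when the sun rises at `+∞` over the graph of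
`G`. -/
def risingSunSet (G : ℝ → ℝ) : Set ℝ := {x | ∃ b, x < b ∧ G x < G b}

section RisingSun

variable {G : ℝ → ℝ}

theorem isOpen_risingSunSet (hG : Continuous G) : IsOpen (risingSunSet G) := by
  have : risingSunSet G = ⋃ b, Iio b ∩ {x | G x < G b} := by
    ext x
    simp [risingSunSet]
  rw [this]
  exact isOpen_iUnion fun b => isOpen_Iio.inter (isOpen_lt hG continuous_const)

theorem le_of_Ico_subset_risingSunSet (hG : Continuous G) {z b : ℝ} (hzb : z ≤ b)
    (hsub : Ico z b ⊆ risingSunSet G) (hb : b ∉ risingSunSet G) : G z ≤ G b := by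
  by_contra! hlt
  -- the last point of `[z, b]` at height `≥ G z` must be shaded, yet nothing to its right in
  -- `[z, b]` is higher, and `b` itself is not shaded
  set K := {y | y ∈ Icc z b ∧ G z ≤ G y}
  have hzK : z ∈ K := ⟨⟨le_rfl, hzb⟩, le_rfl⟩
  have hKbdd : BddAbove K := ⟨b, fun y hy => hy.1.2⟩
  have hwK : sSup K ∈ K :=
    (isClosed_Icc.inter (isClosed_le continuous_const hG)).csSup_mem ⟨z, hzK⟩ hKbdd
  have hwb : sSup K < b := hwK.1.2.lt_of_ne fun h => by
    have := hwK.2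
    rw [h] at this
    linarith
  obtain ⟨y, hwy, hGy⟩ := hsub ⟨hwK.1.1, hwb⟩
  rcases le_or_gt y b with hyb | hby
  · exact (le_csSup hKbdd ⟨⟨hwK.1.1.trans hwy.le, hyb⟩, hwK.2.trans hGy.le⟩).not_gt hwy
  · exact hb ⟨y, hby, by linarith [hwK.2]⟩

theorem eq_of_Ioo_subset_risingSunSet (hG : Continuous G) {a b : ℝ} (hab : a < b)
    (hsub : Ioo a b ⊆ risingSunSet G) (ha : a ∉ risingSunSet G) (hb : b ∉ risingSunSet G) :
    G a = G b := by
  refine le_antisymm ?_ (not_lt.1 fun h => ha ⟨b, hab, h⟩)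
  have hle : ∀ᶠ z in 𝓝[>] a, G z ≤ G b := by
    filter_upwards [Ioo_mem_nhdsGT hab] with z hz
    exact le_of_Ico_subset_risingSunSet hG hz.2.le
      (fun y hy => hsub ⟨hz.1.trans_le hy.1, hy.2⟩) hb
  exact le_of_tendsto ((hG.tendsto a).mono_left nhdsWithin_le_nhds) hle

end RisingSun

section RisingSunMax

variable {f : ℝ → ℝ}

theorem risingSunMax_nonneg (hpos : ∀ x, 0 ≤ f x) (x : ℝ) : 0 ≤ risingSunMax f x :=
  Real.iSup_nonneg fun b => mul_nonneg (one_div_nonneg.2 (sub_nonneg.2 b.2.le))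
    (intervalIntegral.integral_nonneg b.2.le fun u _ => hpos u)

theorem lt_risingSunMax_iff (hcont : Continuous f) (hsupp : HasCompactSupport f) {x t : ℝ} :
    t < risingSunMax f x ↔ ∃ b, x < b ∧ t * (b - x) < ∫ u in x..b, f u := by
  obtain ⟨C, hC⟩ := hcont.bounded_above_of_compact_support hsupp
  have hbdd : BddAbove (range fun b : {b : ℝ // x < b} =>
      (1 / ((b : ℝ) - x)) * ∫ u in x..(b : ℝ), f u) := by
    refine ⟨C, ?_⟩
    rintro _ ⟨⟨b, hxb⟩, rfl⟩
    have hle : ∫ u in x..b, f u ≤ ∫ _ in x..b, C :=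
      intervalIntegral.integral_mono_on hxb.le (hcont.intervalIntegrable x b)
        intervalIntegrable_const fun u _ => (le_abs_self _).trans (hC u)
    rw [intervalIntegral.integral_const, smul_eq_mul] at hle
    change 1 / (b - x) * _ ≤ C
    rw [one_div, inv_mul_le_iff₀ (sub_pos.2 hxb)]
    linarith
  have : Nonempty {b : ℝ // x < b} := ⟨⟨x + 1, lt_add_one x⟩⟩
  refine (lt_ciSup_iff hbdd).trans ?_
  rw [Subtype.exists]
  refine exists_congr fun b => ⟨fun ⟨hxb, h⟩ => ⟨hxb, ?_⟩, fun ⟨hxb, h⟩ => ⟨hxb, ?_⟩⟩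
  · rw [one_div, lt_inv_mul_iff₀ (sub_pos.2 hxb)] at h
    linarith
  · rw [one_div, lt_inv_mul_iff₀ (sub_pos.2 hxb)]
    linarith

theorem setOf_lt_risingSunMax_eq (hcont : Continuous f) (hsupp : HasCompactSupport f) (t : ℝ) :
    {x | t < risingSunMax f x} = risingSunSet fun y => (∫ u in (0 : ℝ)..y, f u) - t * y := by
  ext x
  rw [mem_ofPred_eq, lt_risingSunMax_iff hcont hsupp, risingSunSet, mem_ofPred_eq]
  refine exists_congr fun b => and_congr_right fun _ => ?_
  rw [← intervalIntegral.integral_interval_sub_left (hcont.intervalIntegrable 0 b)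
    (hcont.intervalIntegrable 0 x)]
  constructor <;> intro h <;> linarith

theorem continuous_primitive_sub_mul (hcont : Continuous f) (t : ℝ) :
    Continuous fun y => (∫ u in (0 : ℝ)..y, f u) - t * y :=
  (intervalIntegral.continuous_primitive (fun _ _ => hcont.intervalIntegrable _ _) 0).sub
    (continuous_const.mul continuous_id)

theorem measurable_risingSunMax (hcont : Continuous f) (hsupp : HasCompactSupport f) :
    Measurable (risingSunMax f) :=
  measurable_of_Ioi fun t => by
    refine IsOpen.measurableSet ?_
    change IsOpen {x | t < risingSunMax f x}
    rw [setOf_lt_risingSunMax_eq hcont hsupp]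
    exact isOpen_risingSunSet (continuous_primitive_sub_mul hcont t)

theorem isBounded_setOf_lt_risingSunMax (hcont : Continuous f) (hpos : ∀ x, 0 ≤ f x)
    (hsupp : HasCompactSupport f) {t : ℝ} (ht : 0 < t) :
    Bornology.IsBounded {x | t < risingSunMax f x} := by
  obtain ⟨A, hA⟩ := hsupp.isBounded.subset_ball 0
  have hzero : ∀ u, u ∉ Ioo (-A) A → f u = 0 := fun u hu =>
    image_eq_zero_of_notMem_tsupport fun h => hu (by simpa [Real.ball_eq_Ioo] using hA h)
  set I := ∫ u, f u
  refine (Metric.isBounded_Ioo (-A - I / t) A).subset fun x hx => ?_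
  obtain ⟨b, hxb, hlt⟩ := (lt_risingSunMax_iff hcont hsupp).1 hx
  have htb : 0 < t * (b - x) := mul_pos ht (sub_pos.2 hxb)
  have hmeets : ¬ ∀ u ∈ Ioc x b, f u = 0 := fun h => by
    rw [intervalIntegral.integral_of_le hxb.le, setIntegral_eq_zero_of_forall_eq_zero h] at hlt
    linarith
  have hxA : x < A := by
    by_contra! h
    exact hmeets fun u hu => hzero u fun hu' => by linarith [hu.1, hu'.2]
  have hbA : -A < b := by
    by_contra! h
    exact hmeets fun u hu => hzero u fun hu' => by linarith [hu.2, hu'.1]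
  have hI : ∫ u in x..b, f u ≤ I := by
    rw [intervalIntegral.integral_of_le hxb.le]
    exact setIntegral_le_integral (hcont.integrable_of_hasCompactSupport hsupp)
      (ae_of_all _ hpos)
  have hbx : b - x < I / t := by
    rw [lt_div_iff₀ ht]
    linarith
  exact ⟨by linarith, hxA⟩

theorem withDensity_setOf_lt_risingSunMax (hcont : Continuous f) (hpos : ∀ x, 0 ≤ f x)
    (hsupp : HasCompactSupport f) {t : ℝ} (ht : 0 < t) :
    volume.withDensity (fun x => ENNReal.ofReal (f x)) {x | t < risingSunMax f x}
      = ENNReal.ofReal t * volume {x | t < risingSunMax f x} := by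
  have hbdd := isBounded_setOf_lt_risingSunMax hcont hpos hsupp ht
  set G := fun y => (∫ u in (0 : ℝ)..y, f u) - t * y
  have hG : Continuous G := continuous_primitive_sub_mul hcont t
  rw [setOf_lt_risingSunMax_eq hcont hsupp] at hbdd ⊢
  rw [← smul_eq_mul, ← Measure.smul_apply]
  refine Measure.eq_of_forall_connectedComponentIn (isOpen_risingSunSet hG) fun x hx => ?_
  obtain ⟨a, b, hcomp, ha, hb⟩ :=
    (isOpen_risingSunSet hG).exists_connectedComponentIn_eq_Ioo hbdd hx
  have hxab : x ∈ Ioo a b := hcomp ▸ mem_connectedComponentIn hx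
  have hab : a < b := hxab.1.trans hxab.2
  have hGab : G a = G b :=
    eq_of_Ioo_subset_risingSunSet hG hab (hcomp ▸ connectedComponentIn_subset _ _) ha hb
  have hint : ∫ u in Ioo a b, f u = t * (b - a) := by
    rw [← integral_Ioc_eq_integral_Ioo, ← intervalIntegral.integral_of_le hab.le,
      ← intervalIntegral.integral_interval_sub_left (hcont.intervalIntegrable 0 b)
        (hcont.intervalIntegrable 0 a)]
    linarith
  rw [hcomp, withDensity_apply _ measurableSet_Ioo, Measure.smul_apply, Real.volume_Ioo,
    smul_eq_mul, ← ofReal_integral_eq_lintegral_ofReal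
      (hcont.integrable_of_hasCompactSupport hsupp).integrableOn (ae_of_all _ hpos),
    hint, ENNReal.ofReal_mul ht.le]

end RisingSunMax

theorem stmt_5_general (p : ℝ) (hp : 1 < p) (f : ℝ → ℝ) (hcont : Continuous f)
    (hpos : ∀ x, 0 ≤ f x) (hsupp : HasCompactSupport f) :
    (1 / p) * ∫ x, (risingSunMax f x) ^ p
      = (1 / (p - 1)) * ∫ x, f x * (risingSunMax f x) ^ (p - 1) := by
  set M := risingSunMax f
  set ν := volume.withDensity fun x => ENNReal.ofReal (f x)
  have hM : Measurable M := measurable_risingSunMax hcont hsupp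
  have hM0 : ∀ x, 0 ≤ M x := risingSunMax_nonneg hpos
  have hlayer : ∫⁻ t in Ioi 0, volume {x | t < M x} * ENNReal.ofReal (t ^ (p - 1))
      = ∫⁻ t in Ioi 0, ν {x | t < M x} * ENNReal.ofReal (t ^ (p - 1 - 1)) := by
    refine setLIntegral_congr_fun measurableSet_Ioi fun t ht => ?_
    rw [withDensity_setOf_lt_risingSunMax hcont hpos hsupp ht, mul_comm (ENNReal.ofReal t),
      mul_assoc, ← ENNReal.ofReal_mul ht.le, ← Real.rpow_one_add' ht.le (by linarith),
      show 1 + (p - 1 - 1) = p - 1 by ring, mul_comm]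
  have hLHS := lintegral_rpow_eq_lintegral_meas_lt_mul volume (ae_of_all _ hM0) hM.aemeasurable
    (by linarith : 0 < p)
  have hRHS := lintegral_rpow_eq_lintegral_meas_lt_mul ν (ae_of_all _ hM0) hM.aemeasurable
    (by linarith : 0 < p - 1)
  rw [lintegral_withDensity_eq_lintegral_mul _ hcont.measurable.ennreal_ofReal
    (hM.pow_const _).ennreal_ofReal] at hRHS
  rw [integral_eq_lintegral_of_nonneg_ae (ae_of_all _ fun x => Real.rpow_nonneg (hM0 x) p)
      (hM.pow_const p).aestronglyMeasurable,
    integral_eq_lintegral_of_nonneg_ae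
      (ae_of_all _ fun x => mul_nonneg (hpos x) (Real.rpow_nonneg (hM0 x) _))
      (hcont.measurable.mul (hM.pow_const _)).aestronglyMeasurable]
  simp only [Pi.mul_apply, ← ENNReal.ofReal_mul (hpos _)] at hRHS
  rw [hLHS, hRHS, hlayer, ENNReal.toReal_mul, ENNReal.toReal_mul,
    ENNReal.toReal_ofReal (by linarith), ENNReal.toReal_ofReal (by linarith)]
  field_simp [(sub_pos.2 hp).ne']

/-- For continuous, compactly supported `f ≥ 0` in `L^p(ℝ)`, `p > 1`:
`(1/p) ‖M_R f‖_p^p = (1/(p-1)) ∫ f (M_R f)^{p-1}`. -/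
theorem stmt_5 (p : ℝ) (hp : 1 < p) (f : ℝ → ℝ) (hcont : Continuous f)
    (hpos : ∀ x, 0 ≤ f x) (hsupp : HasCompactSupport f)
    (hLp : MemLp f (ENNReal.ofReal p)) :
    (1 / p) * ∫ x, (risingSunMax f x) ^ p
      = (1 / (p - 1)) * ∫ x, f x * (risingSunMax f x) ^ (p - 1) :=
  stmt_5_general p hp f hcont hpos hsupp
end

section
/- Fix p > 1 and λ > 1, and define B(x, y, z) = z^p + ((λ^p - 1)/(λ^p - λ)) · max(y - x·z^{p-1}, 0) for 0 ≤ x ≤ z and y ≥ 0. Then B is nondecreasing in z: if 0 ≤ x ≤ z₁ ≤ z₂ and y ≥ 0, then B(x, y, z₁) ≤ B(x, y, z₂). -/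
/-- The Bellman function `B(x,y,z) = z^p + ((λ^p−1)/(λ^p−λ))·(y − x z^{p−1})₊`
is nondecreasing in `z` on its domain `0 ≤ x ≤ z`, `y ≥ 0`. -/
theorem stmt_7 (p lam : ℝ) (hp : 1 < p) (hlam : 1 < lam)
    (B : ℝ → ℝ → ℝ → ℝ)
    (hB : ∀ x y z, B x y z =
      z ^ p + ((lam ^ p - 1) / (lam ^ p - lam)) * max (y - x * z ^ (p - 1)) 0)
    (x y z₁ z₂ : ℝ) (hx : 0 ≤ x) (hxz : x ≤ z₁) (hz : z₁ ≤ z₂) (hy : 0 ≤ y) :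
    B x y z₁ ≤ B x y z₂ := by
  rw [hB, hB]
  have hz1 : 0 ≤ z₁ := hx.trans hxz
  have hz2 : 0 ≤ z₂ := hz1.trans hz
  have hp0 : (0:ℝ) < p - 1 := by linarith
  set c : ℝ := (lam ^ p - 1) / (lam ^ p - lam) with hc
  -- lam < lam ^ p
  have hlp : lam < lam ^ p := by
    nth_rewrite 1 [← Real.rpow_one lam]
    exact Real.rpow_lt_rpow_of_exponent_lt hlam hp
  have hden : 0 < lam ^ p - lam := by linarith
  -- Bernoulli: 1 + p * (lam - 1) ≤ lam ^ p
  have hbern : 1 + p * (lam - 1) ≤ lam ^ p := by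
    have := one_add_mul_self_le_rpow_one_add (s := lam - 1) (by linarith) hp.le
    simpa using this
  have hcpos : 0 ≤ c := by
    apply div_nonneg _ hden.le; linarith
  have hcle : c ≤ p / (p - 1) := by
    rw [hc, div_le_div_iff₀ hden (by linarith)]
    nlinarith
  -- monotonicity of rpow
  have hmono : z₁ ^ (p-1) ≤ z₂ ^ (p-1) := Real.rpow_le_rpow hz1 hz hp0.le
  have hmonop : z₁ ^ p ≤ z₂ ^ p := Real.rpow_le_rpow hz1 hz (by linarith)
  -- max difference bound
  set d : ℝ := x * (z₂ ^ (p-1) - z₁ ^ (p-1)) with hd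
  have hd0 : 0 ≤ d := mul_nonneg hx (by linarith)
  have hmax : max (y - x * z₁ ^ (p-1)) 0 ≤ max (y - x * z₂ ^ (p-1)) 0 + d := by
    rcases le_total (y - x * z₁ ^ (p-1)) 0 with h | h
    · calc max (y - x * z₁ ^ (p-1)) 0 = 0 := max_eq_right h
        _ ≤ _ := by positivity
    · rw [max_eq_left h]
      have : y - x * z₁ ^ (p-1) ≤ (y - x * z₂ ^ (p-1)) + d :=
        le_of_eq (by rw [hd]; ring)
      exact this.trans (by gcongr; exact le_max_left _ _)
  -- Young's inequality: z₁ * z₂^(p-1) ≤ z₁^p/p + z₂^p * (p-1)/p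
  have hpne : p ≠ 0 := by linarith
  have hp1ne : p - 1 ≠ 0 := ne_of_gt hp0
  have hconj : p.HolderConjugate (p / (p-1)) := .conjExponent hp
  have hyoung : z₁ * z₂ ^ (p-1) ≤ z₁ ^ p / p + z₂ ^ p * ((p-1)/p) := by
    have h := Real.young_inequality_of_nonneg hz1 (Real.rpow_nonneg hz2 (p-1)) hconj
    have hpow : (z₂ ^ (p-1)) ^ (p / (p-1)) = z₂ ^ p := by
      rw [← Real.rpow_mul hz2]
      congr 1
      field_simp
    rw [hpow] at h
    have heq : z₂ ^ p / (p / (p-1)) = z₂ ^ p * ((p-1)/p) := by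
      field_simp
    rw [heq] at h
    exact h
  have hz1p : z₁ * z₁ ^ (p-1) = z₁ ^ p := by
    nth_rewrite 1 [← Real.rpow_one z₁]
    rw [← Real.rpow_add' hz1 (by simpa using hpne)]
    norm_num
  have hppos : (0:ℝ) < p := by linarith
  have hyoung' : p * (z₁ * z₂ ^ (p-1)) ≤ z₁ ^ p + z₂ ^ p * (p-1) := by
    calc p * (z₁ * z₂ ^ (p-1)) ≤ p * (z₁ ^ p / p + z₂ ^ p * ((p-1)/p)) :=
          mul_le_mul_of_nonneg_left hyoung hppos.le
      _ = z₁ ^ p + z₂ ^ p * (p-1) := by field_simp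
  have hxd : d ≤ z₁ * (z₂ ^ (p-1) - z₁ ^ (p-1)) := by
    rw [hd]
    exact mul_le_mul_of_nonneg_right hxz (by linarith)
  have h1 : p * d ≤ (p-1) * (z₂ ^ p - z₁ ^ p) := by
    nlinarith [mul_le_mul_of_nonneg_left hxd hppos.le, hyoung', hz1p]
  have key : (p/(p-1)) * d ≤ z₂ ^ p - z₁ ^ p := by
    rw [div_mul_eq_mul_div, div_le_iff₀ hp0]
    linarith
  have hcd : c * d ≤ (p/(p-1)) * d := mul_le_mul_of_nonneg_right hcle hd0
  have hcm := mul_le_mul_of_nonneg_left hmax hcpos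
  nlinarith [hcm, hcd, key]
end

section
/- Fix p > 1, λ > 1, and set c = (λ^p - 1)/(λ^p - λ) and B(x,y,z) = z^p + c·max(y - x z^{p-1}, 0). Let z > 0, let weights α_i ≥ 0 sum to 1, and let x_i ≥ 0, y_i ≥ 0 satisfy x_i ≤ λ · x where x = Σ α_i x_i, y = Σ α_i y_i, and x ≤ z. Then B(x, y, z) ≤ Σ α_i B(x_i, y_i, max(x_i, z)). -/
/-!
Since `c ≥ 0`, `B(x, y, z)` is the maximum of `z^p` and the affine function
`z^p + c (y - x z^{p-1})` of `(x, y)`, so it suffices to bound each of them by the average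
of the `B(x_i, y_i, max(x_i, z))`, i.e. to bound them termwise. For `z^p` this is monotonicity
in `z`. For the affine part, the only nontrivial case is `z < x_i ≤ λ z`, where, after scaling
by `z`, it reduces to `c (s^p - s) ≤ s^p - 1` for `1 < s ≤ λ`: the secant slopes
`(s^p - 1)/(s - 1)` of the convex function `s ↦ s^p` increase in `s`, and `c` is exactly the
constant for which equality holds at `s = λ`.
-/

open Finset

noncomputable def bellman (p c x y z : ℝ) : ℝ := z ^ p + c * max (y - x * z ^ (p - 1)) 0

section

variable {p lam c : ℝ}

lemma rpow_sub_one_mul_le {s : ℝ} (hp : 1 ≤ p) (hs : 1 < s) (hslam : s ≤ lam) :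
    (s ^ p - 1) * (lam - 1) ≤ (lam ^ p - 1) * (s - 1) := by
  have hslope := (convexOn_rpow hp).secant_mono (a := 1) (Set.mem_Ici.2 zero_le_one)
    (Set.mem_Ici.2 (by linarith)) (Set.mem_Ici.2 (by linarith)) hs.ne' (by linarith) hslam
  rw [Real.one_rpow, div_le_div_iff₀ (by linarith) (by linarith)] at hslope
  exact hslope

lemma mul_rpow_sub_self_le {s : ℝ} (hp : 1 < p)
    (hc : c ≤ (lam ^ p - 1) / (lam ^ p - lam)) (hs : 1 < s) (hslam : s ≤ lam) :
    c * (s ^ p - s) ≤ s ^ p - 1 := by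
  have hs_pos : 0 < s ^ p - s := by linarith [Real.self_lt_rpow_of_one_lt hs hp]
  have hlam_pos : 0 < lam ^ p - lam := by
    linarith [Real.self_lt_rpow_of_one_lt (hs.trans_le hslam) hp]
  calc c * (s ^ p - s) ≤ (lam ^ p - 1) / (lam ^ p - lam) * (s ^ p - s) := by gcongr
    _ ≤ s ^ p - 1 := by
      rw [div_mul_eq_mul_div, div_le_iff₀ hlam_pos]
      linear_combination rpow_sub_one_mul_le hp.le hs hslam

lemma rpow_add_mul_rpow_le {z t : ℝ} (hp : 1 < p)
    (hc : c ≤ (lam ^ p - 1) / (lam ^ p - lam)) (hz : 0 < z) (hzt : z < t) (htlam : t ≤ lam * z) :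
    z ^ p + c * t ^ p ≤ t ^ p + c * (t * z ^ (p - 1)) := by
  set s := t / z
  have ht : t = s * z := (div_mul_cancel₀ t hz.ne').symm
  have hs : 1 < s := (one_lt_div hz).2 hzt
  have hslam : s ≤ lam := (div_le_iff₀ hz).2 htlam
  have hzp : 0 < z ^ p := Real.rpow_pos_of_pos hz p
  have htp : t ^ p = s ^ p * z ^ p := by rw [ht, Real.mul_rpow (by linarith) hz.le]
  have htz : t * z ^ (p - 1) = s * z ^ p := by
    rw [ht, Real.rpow_sub_one hz.ne']
    field_simp
  rw [htp, htz]
  linear_combination mul_le_mul_of_nonneg_left (mul_rpow_sub_self_le hp hc hs hslam) hzp.le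

lemma bellman_eq_max {x y z : ℝ} (hc0 : 0 ≤ c) :
    bellman p c x y z = max (z ^ p + c * (y - x * z ^ (p - 1))) (z ^ p) := by
  rw [bellman, mul_max_of_nonneg _ _ hc0, mul_zero, ← max_add_add_left, add_zero]

lemma rpow_le_bellman {t y z : ℝ} (hp : 0 ≤ p) (hc0 : 0 ≤ c) (hz : 0 ≤ z) :
    z ^ p ≤ bellman p c t y (max t z) := by
  have hmono : z ^ p ≤ max t z ^ p := Real.rpow_le_rpow hz (le_max_right t z) hp
  have hcmax := mul_nonneg hc0 (le_max_right (y - t * max t z ^ (p - 1)) 0)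
  rw [bellman]
  linarith

lemma affine_le_bellman {t y z : ℝ} (hp : 1 < p) (hc0 : 0 ≤ c)
    (hc : c ≤ (lam ^ p - 1) / (lam ^ p - lam)) (hz : 0 < z) (htlam : t ≤ lam * z) :
    z ^ p + c * (y - t * z ^ (p - 1)) ≤ bellman p c t y (max t z) := by
  rw [bellman]
  rcases le_or_gt t z with htz | hzt
  · rw [max_eq_right htz]
    gcongr
    exact le_max_left _ _
  · rw [max_eq_left hzt.le]
    have hjump := rpow_add_mul_rpow_le hp hc hz hzt htlam
    have hcmax := mul_le_mul_of_nonneg_left (le_max_left (y - t * t ^ (p - 1)) 0) hc0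
    have htp : t * t ^ (p - 1) = t ^ p := by
      rw [← Real.rpow_one_add' (hz.trans hzt).le (by linarith), add_sub_cancel]
    rw [htp] at hcmax ⊢
    linear_combination hjump + hcmax

end

theorem stmt_8_general (p lam : ℝ) (hp : 1 < p) (hlam : 1 < lam)
    (c : ℝ) (hc : c = (lam ^ p - 1) / (lam ^ p - lam))
    (B : ℝ → ℝ → ℝ → ℝ)
    (hB : ∀ x y z, B x y z = z ^ p + c * max (y - x * z ^ (p - 1)) 0)
    (ι : Type*) (A : Finset ι) (α x y : ι → ℝ)
    (hα : ∀ i ∈ A, 0 ≤ α i) (hsum : ∑ i ∈ A, α i = 1)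
    (z X Y : ℝ) (hz : 0 < z)
    (hX : X = ∑ i ∈ A, α i * x i) (hY : Y = ∑ i ∈ A, α i * y i)
    (hxlam : ∀ i ∈ A, x i ≤ lam * X) (hXz : X ≤ z) :
    B X Y z ≤ ∑ i ∈ A, α i * B (x i) (y i) (max (x i) z) := by
  have hc0 : 0 ≤ c := hc ▸ div_nonneg (by linarith [Real.one_lt_rpow hlam (by linarith : 0 < p)])
    (by linarith [Real.self_lt_rpow_of_one_lt hlam hp])
  have hxz : ∀ i ∈ A, x i ≤ lam * z := fun i hi =>
    (hxlam i hi).trans (mul_le_mul_of_nonneg_left hXz (by linarith))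
  have hbellman : ∀ x y z, B x y z = bellman p c x y z := hB
  simp only [hbellman]
  rw [bellman_eq_max hc0]
  refine max_le ?_ ?_
  · calc z ^ p + c * (Y - X * z ^ (p - 1))
        = (∑ i ∈ A, α i) * z ^ p + c * (∑ i ∈ A, α i * y i)
            - c * z ^ (p - 1) * ∑ i ∈ A, α i * x i := by rw [hsum, hX, hY]; ring
      _ = ∑ i ∈ A, α i * (z ^ p + c * (y i - x i * z ^ (p - 1))) := by
          simp only [sum_mul, mul_sum, ← sum_add_distrib, ← sum_sub_distrib]
          exact sum_congr rfl fun i _ => by ring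
      _ ≤ _ := sum_le_sum fun i hi => mul_le_mul_of_nonneg_left
          (affine_le_bellman hp hc0 hc.le hz (hxz i hi)) (hα i hi)
  · calc z ^ p = ∑ i ∈ A, α i * z ^ p := by rw [← sum_mul, hsum, one_mul]
      _ ≤ _ := sum_le_sum fun i hi => mul_le_mul_of_nonneg_left
          (rpow_le_bellman (by linarith) hc0 hz.le) (hα i hi)

/-- The main inequality for the Bellman function
`B(x,y,z) = z^p + c·(y − x z^{p−1})₊`, `c = (λ^p−1)/(λ^p−λ)`:
if weights `α_i ≥ 0` sum to `1`, `x = Σ α_i x_i`, `y = Σ α_i y_i`, `x_i ≤ λ x`,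
`x ≤ z`, `z > 0`, then `B(x,y,z) ≤ Σ α_i B(x_i, y_i, max(x_i, z))`. -/
theorem stmt_8 (p lam : ℝ) (hp : 1 < p) (hlam : 1 < lam)
    (c : ℝ) (hc : c = (lam ^ p - 1) / (lam ^ p - lam))
    (B : ℝ → ℝ → ℝ → ℝ)
    (hB : ∀ x y z, B x y z = z ^ p + c * max (y - x * z ^ (p - 1)) 0)
    (ι : Type*) (A : Finset ι) (α x y : ι → ℝ)
    (hα : ∀ i ∈ A, 0 ≤ α i) (hsum : ∑ i ∈ A, α i = 1)
    (hx : ∀ i ∈ A, 0 ≤ x i) (hy : ∀ i ∈ A, 0 ≤ y i)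
    (z X Y : ℝ) (hz : 0 < z)
    (hX : X = ∑ i ∈ A, α i * x i) (hY : Y = ∑ i ∈ A, α i * y i)
    (hxlam : ∀ i ∈ A, x i ≤ lam * X) (hXz : X ≤ z) :
    B X Y z ≤ ∑ i ∈ A, α i * B (x i) (y i) (max (x i) z) :=
  stmt_8_general p lam hp hlam c hc B hB ι A α x y hα hsum z X Y hz hX hY hxlam hXz
end

section
/- Let p > 1 and n ≥ 1 and let B(n) be a constant such that there exists, for every t > 0, a countable family of convex bodies {K_{t,j}} with overlap function ψ(x,t) = Σ_j 1_{K_{t,j}}(x) satisfying: ψ ≤ B(n) everywhere; ψ(x,t) = 0 whenever t > M₁f(x); ψ(x,t) ≥ 1 whenever f(x) > t; and ∫ t ψ(x,t) dx = ∫ ψ(x,t) f(x) dx for all t > 0. Then ‖M₁ f‖_{L^p}^p ≥ (1 + 1/((p-1)B(n))) ‖f‖_{L^p}^p. -/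
/-!
Fix a level `t > 0` and write `ψ = ψ(·, t)`. As `ψ ≥ 1` on `{f > t}`, the balance identity
`∫ ψ (f - t) = 0` gives
`∫ (f - t)⁺ ≤ ∫ ψ (f - t)⁺ = ∫ ψ (t - f)⁺ ≤ B t |{M₁f ≥ t} \ {f > t}|`,
because `ψ ≤ B` vanishes off `{M₁f ≥ t}` and `0 ≤ t - f ≤ t`. As `{f > t} ⊆ {M₁f ≥ t}`, this reads
`t B |{f > t}| + ∫ (f - t)⁺ ≤ t B |{M₁f ≥ t}|`.
Multiplying by `p t^(p-2) / B` and integrating over `t > 0`, the layer cake formula turns the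
measure terms into `‖f‖_p^p` and `‖M₁f‖_p^p`, while Tonelli and
`∫₀^a t^(p-2) (a - t) dt = a^p / (p (p-1))` turn the excess term into `‖f‖_p^p / ((p-1) B)`.
-/

open MeasureTheory Set
open scoped ENNReal

section Calculus

variable {p : ℝ}

theorem integral_rpow_sub_two_mul_sub (hp : 1 < p) {a : ℝ} (ha : 0 ≤ a) :
    ∫ t in (0)..a, t ^ (p - 2) * (a - t) = a ^ p / (p * (p - 1)) := by
  have hp1 : p - 1 ≠ 0 := by linarith
  have hrpow_succ : ∀ {t : ℝ}, 0 ≤ t → t ^ (p - 2) * t = t ^ (p - 1) := fun ht => by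
    rw [← Real.rpow_add_one' ht (by linarith)]; ring_nf
  have hsplit : EqOn (fun t => t ^ (p - 2) * (a - t)) (fun t => a * t ^ (p - 2) - t ^ (p - 1))
      (uIcc 0 a) := fun t ht => by
    rw [uIcc_of_le ha] at ht
    simp only [← hrpow_succ ht.1]
    ring
  rw [intervalIntegral.integral_congr hsplit, intervalIntegral.integral_sub
      ((intervalIntegral.intervalIntegrable_rpow' (by linarith)).const_mul a)
      (intervalIntegral.intervalIntegrable_rpow' (by linarith)),
    intervalIntegral.integral_const_mul, integral_rpow (Or.inl (by linarith)),
    integral_rpow (Or.inl (by linarith)), show p - 2 + 1 = p - 1 by ring,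
    show p - 1 + 1 = p by ring, Real.zero_rpow hp1, Real.zero_rpow (by linarith)]
  have ha_mul : a * a ^ (p - 1) = a ^ p := by
    rw [mul_comm, ← Real.rpow_add_one' ha (by linarith)]; ring_nf
  rw [sub_zero, sub_zero, mul_div_assoc', ha_mul]
  field_simp
  ring

theorem setLIntegral_Ioi_rpow_sub_two_mul_sub (hp : 1 < p) {a : ℝ} (ha : 0 ≤ a) :
    ∫⁻ t in Ioi 0, ENNReal.ofReal (t ^ (p - 2)) * ENNReal.ofReal (a - t)
      = ENNReal.ofReal (a ^ p / (p * (p - 1))) := by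
  have hvanish : EqOn (fun t => ENNReal.ofReal (t ^ (p - 2)) * ENNReal.ofReal (a - t)) 0
      (Ioi a) := fun t ht => by
    simp [ENNReal.ofReal_eq_zero.2 (sub_nonpos.2 (le_of_lt ht))]
  have hint : IntegrableOn (fun t => t ^ (p - 2) * (a - t)) (Ioc 0 a) :=
    (intervalIntegrable_iff_integrableOn_Ioc_of_le ha).1
      ((intervalIntegral.intervalIntegrable_rpow' (by linarith)).mul_continuousOn
        (continuous_const.sub continuous_id).continuousOn)
  have hnonneg : 0 ≤ᵐ[volume.restrict (Ioc 0 a)] fun t => t ^ (p - 2) * (a - t) :=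
    (ae_restrict_mem measurableSet_Ioc).mono fun t ht =>
      mul_nonneg (Real.rpow_nonneg ht.1.le _) (sub_nonneg.2 ht.2)
  rw [← Ioc_union_Ioi_eq_Ioi ha, lintegral_union measurableSet_Ioi (Ioc_disjoint_Ioi le_rfl),
    setLIntegral_congr_fun measurableSet_Ioi hvanish, Pi.zero_def, lintegral_zero, add_zero,
    ← integral_rpow_sub_two_mul_sub hp ha, intervalIntegral.integral_of_le ha,
    ofReal_integral_eq_lintegral_ofReal hint hnonneg]
  exact setLIntegral_congr_fun measurableSet_Ioc fun t ht =>
    (ENNReal.ofReal_mul (Real.rpow_nonneg ht.1.le _)).symm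

end Calculus

section Measure

variable {α : Type*} [MeasurableSpace α] {μ : Measure α}

theorem setLIntegral_Ioi_rpow_sub_two_mul_lintegral_sub [SFinite μ] {p : ℝ} (hp : 1 < p)
    {f : α → ℝ} (hf0 : ∀ x, 0 ≤ f x) (hf : Measurable f) :
    ∫⁻ t in Ioi 0, ENNReal.ofReal (t ^ (p - 2)) * ∫⁻ x, ENNReal.ofReal (f x - t) ∂μ
      = ENNReal.ofReal (1 / (p * (p - 1))) * ∫⁻ x, ENNReal.ofReal (f x ^ p) ∂μ := by
  have hmeas : Measurable fun z : ℝ × α =>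
      ENNReal.ofReal (z.1 ^ (p - 2)) * ENNReal.ofReal (f z.2 - z.1) :=
    (measurable_fst.pow_const _).ennreal_ofReal.mul
      ((hf.comp measurable_snd).sub measurable_fst).ennreal_ofReal
  simp_rw [← lintegral_const_mul' _ _ ENNReal.ofReal_ne_top]
  rw [lintegral_lintegral_swap hmeas.aemeasurable]
  refine lintegral_congr fun x => ?_
  rw [setLIntegral_Ioi_rpow_sub_two_mul_sub hp (hf0 x), div_eq_mul_one_div,
    ENNReal.ofReal_mul (Real.rpow_nonneg (hf0 x) _), mul_comm]

theorem lintegral_ofReal_eq_lintegral_ofReal_neg_of_integral_eq_zero {g : α → ℝ}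
    (hg : Integrable g μ) (h : ∫ x, g x ∂μ = 0) :
    ∫⁻ x, ENNReal.ofReal (g x) ∂μ = ∫⁻ x, ENNReal.ofReal (-g x) ∂μ := by
  rw [integral_eq_lintegral_pos_part_sub_lintegral_neg_part hg, sub_eq_zero] at h
  exact (ENNReal.toReal_eq_toReal_iff' hg.lintegral_lt_top.ne hg.neg.lintegral_lt_top.ne).1 h

theorem level_ineq_of_balance {f ψ M : α → ℝ} {t B : ℝ} (ht : 0 < t) (hB : 0 < B)
    (hf0 : ∀ x, 0 ≤ f x) (hf : Integrable f μ) (hψ : Measurable ψ) (hM : Measurable M)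
    (hψ0 : ∀ x, 0 ≤ ψ x) (hψB : ∀ x, ψ x ≤ B)
    (hzero : ∀ x, M x < t → ψ x = 0) (hone : ∀ x, t < f x → 1 ≤ ψ x)
    (hbal : ∫ x, t * ψ x ∂μ = ∫ x, ψ x * f x ∂μ) :
    ENNReal.ofReal (t * B) * μ {x | t < f x} + ∫⁻ x, ENNReal.ofReal (f x - t) ∂μ
      ≤ ENNReal.ofReal (t * B) * μ {x | t ≤ M x} := by
  set S := {x | t ≤ M x}
  set A := {x | t < f x}
  have hSm : MeasurableSet S := measurableSet_le measurable_const hM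
  have hA : NullMeasurableSet A μ := nullMeasurableSet_lt aemeasurable_const hf.aemeasurable
  have hψS : ∀ x, x ∉ S → ψ x = 0 := fun x hx => hzero x (not_le.1 hx)
  have hAS : A ⊆ S := fun x hx => by
    by_contra hxS
    linarith [hψS x hxS, hone x hx]
  rcases eq_or_ne (μ S) ∞ with hS | hS
  · rw [hS, ENNReal.mul_top (by simp [ht, hB])]
    exact le_top
  have hψ_norm : ∀ x, ‖ψ x‖ ≤ S.indicator (fun _ => B) x := fun x => by
    by_cases hx : x ∈ S
    · simpa [hx, abs_of_nonneg (hψ0 x)] using hψB x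
    · simp [hx, hψS x hx]
  have hψint : Integrable ψ μ :=
    ((integrableOn_const hS).integrable_indicator hSm).mono' hψ.aestronglyMeasurable
      (.of_forall hψ_norm)
  have hψfint : Integrable (fun x => ψ x * f x) μ :=
    hf.bdd_mul hψ.aestronglyMeasurable (.of_forall fun x => (hψ_norm x).trans
      (indicator_le_self' (fun _ _ => hB.le) x))
  have hgint : Integrable (fun x => ψ x * (f x - t)) μ := by
    simp_rw [mul_sub]
    exact hψfint.sub (hψint.mul_const t)
  have hg : ∫ x, ψ x * (f x - t) ∂μ = 0 := by
    simp_rw [mul_sub]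
    rw [integral_sub hψfint (hψint.mul_const t), integral_mul_const, ← hbal,
      integral_const_mul]
    ring
  have hexcess : ∫⁻ x, ENNReal.ofReal (f x - t) ∂μ ≤ ENNReal.ofReal (t * B) * μ (S \ A) :=
    calc ∫⁻ x, ENNReal.ofReal (f x - t) ∂μ
        ≤ ∫⁻ x, ENNReal.ofReal (ψ x * (f x - t)) ∂μ := lintegral_mono fun x => by
          by_cases hx : t < f x
          · exact ENNReal.ofReal_le_ofReal (le_mul_of_one_le_left (by linarith) (hone x hx))
          · simp [ENNReal.ofReal_eq_zero.2 (by linarith : f x - t ≤ 0)]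
      _ = ∫⁻ x, ENNReal.ofReal (-(ψ x * (f x - t))) ∂μ :=
          lintegral_ofReal_eq_lintegral_ofReal_neg_of_integral_eq_zero hgint hg
      _ ≤ ∫⁻ x, (S \ A).indicator (fun _ => ENNReal.ofReal (t * B)) x ∂μ :=
          lintegral_mono fun x => by
          by_cases hx : x ∈ S \ A
          · rw [indicator_of_mem hx]
            have hfx : t - f x ≤ t := by linarith [hf0 x]
            have := mul_le_mul (hψB x) hfx (sub_nonneg.2 (not_lt.1 hx.2)) hB.le
            exact ENNReal.ofReal_le_ofReal (by linarith)
          · rw [indicator_of_notMem hx, nonpos_iff_eq_zero, ENNReal.ofReal_eq_zero, neg_nonpos]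
            by_cases hxS : x ∈ S
            · have hfx : t < f x := not_not.1 fun h => hx ⟨hxS, h⟩
              exact mul_nonneg (hψ0 x) (by linarith)
            · simp [hψS x hxS]
      _ = ENNReal.ofReal (t * B) * μ (S \ A) :=
          lintegral_indicator_const₀ (hSm.nullMeasurableSet.diff hA) _
  calc ENNReal.ofReal (t * B) * μ A + ∫⁻ x, ENNReal.ofReal (f x - t) ∂μ
      ≤ ENNReal.ofReal (t * B) * μ A + ENNReal.ofReal (t * B) * μ (S \ A) := by gcongr
    _ = ENNReal.ofReal (t * B) * μ S := by
      rw [← mul_add, measure_add_sdiff hA, union_eq_right.2 hAS]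

theorem lintegral_rpow_le_of_level_ineq [SFinite μ] {f g : α → ℝ} {p B : ℝ} (hp : 1 < p)
    (hB : 0 < B) (hf0 : ∀ x, 0 ≤ f x) (hf : Measurable f) (hg0 : ∀ x, 0 ≤ g x)
    (hg : Measurable g)
    (hlevel : ∀ t > 0, ENNReal.ofReal (t * B) * μ {x | t < f x} + ∫⁻ x, ENNReal.ofReal (f x - t) ∂μ
      ≤ ENNReal.ofReal (t * B) * μ {x | t ≤ g x}) :
    ENNReal.ofReal (1 + 1 / ((p - 1) * B)) * ∫⁻ x, ENNReal.ofReal (f x ^ p) ∂μ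
      ≤ ∫⁻ x, ENNReal.ofReal (g x ^ p) ∂μ := by
  have hp0 : 0 < p := by linarith
  set F : ℝ → ℝ≥0∞ := fun t => μ {x | t < f x} * ENNReal.ofReal (t ^ (p - 1))
  set G : ℝ → ℝ≥0∞ := fun t => ENNReal.ofReal (t ^ (p - 2)) * ∫⁻ x, ENNReal.ofReal (f x - t) ∂μ
  have hF : Measurable F := by
    have hanti : Antitone fun t => μ {x | t < f x} := fun s t hst =>
      measure_mono fun x hx => lt_of_le_of_lt hst hx
    exact hanti.measurable.mul (measurable_id.pow_const _).ennreal_ofReal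
  have hscaled : ∀ t ∈ Ioi (0 : ℝ),
      F t + ENNReal.ofReal B⁻¹ * G t ≤ μ {x | t ≤ g x} * ENNReal.ofReal (t ^ (p - 1)) := by
    intro t (ht : 0 < t)
    have hweight : ENNReal.ofReal (t ^ (p - 2) * B⁻¹) * ENNReal.ofReal (t * B)
        = ENNReal.ofReal (t ^ (p - 1)) := by
      rw [← ENNReal.ofReal_mul (by positivity), show p - 1 = p - 2 + 1 by ring,
        Real.rpow_add_one ht.ne']
      field_simp
    calc F t + ENNReal.ofReal B⁻¹ * G t
        = ENNReal.ofReal (t ^ (p - 2) * B⁻¹) * (ENNReal.ofReal (t * B) * μ {x | t < f x}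
            + ∫⁻ x, ENNReal.ofReal (f x - t) ∂μ) := by
          rw [mul_add, ← mul_assoc _ (ENNReal.ofReal (t * B)), hweight,
            ENNReal.ofReal_mul (by positivity : 0 ≤ t ^ (p - 2))]
          ring
      _ ≤ ENNReal.ofReal (t ^ (p - 2) * B⁻¹) * (ENNReal.ofReal (t * B) * μ {x | t ≤ g x}) := by
          gcongr
          exact hlevel t ht
      _ = μ {x | t ≤ g x} * ENNReal.ofReal (t ^ (p - 1)) := by
          rw [← mul_assoc, hweight, mul_comm]
  calc ENNReal.ofReal (1 + 1 / ((p - 1) * B)) * ∫⁻ x, ENNReal.ofReal (f x ^ p) ∂μ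
      = ENNReal.ofReal p * ((∫⁻ t in Ioi 0, F t) + ENNReal.ofReal B⁻¹ * ∫⁻ t in Ioi 0, G t) := by
        rw [mul_add, ← lintegral_rpow_eq_lintegral_meas_lt_mul μ (.of_forall hf0)
          hf.aemeasurable hp0, setLIntegral_Ioi_rpow_sub_two_mul_lintegral_sub hp hf0 hf,
          ENNReal.ofReal_add zero_le_one (by positivity), ENNReal.ofReal_one, add_mul, one_mul,
          ← mul_assoc, ← mul_assoc, ← ENNReal.ofReal_mul hp0.le,
          ← ENNReal.ofReal_mul (by positivity)]
        congr 3
        field_simp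
    _ = ENNReal.ofReal p * ∫⁻ t in Ioi 0, (F t + ENNReal.ofReal B⁻¹ * G t) := by
        rw [lintegral_add_left hF, lintegral_const_mul' _ _ ENNReal.ofReal_ne_top]
    _ ≤ ENNReal.ofReal p * ∫⁻ t in Ioi 0, μ {x | t ≤ g x} * ENNReal.ofReal (t ^ (p - 1)) :=
        mul_le_mul_right (setLIntegral_mono' measurableSet_Ioi hscaled) _
    _ = ∫⁻ x, ENNReal.ofReal (g x ^ p) ∂μ :=
        (lintegral_rpow_eq_lintegral_meas_le_mul μ (.of_forall hg0) hg.aemeasurable hp0).symm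

end Measure

theorem stmt_10_general (n : ℕ) (p : ℝ) (hp : 1 < p)
    (Bn : ℝ) (hBn : 1 ≤ Bn)
    (f M₁f : EuclideanSpace ℝ (Fin n) → ℝ)
    (hfc : Continuous f) (hf0 : ∀ x, 0 ≤ f x) (hfsupp : HasCompactSupport f)
    (hMmeas : Measurable M₁f)
    (K : ℝ → ℕ → Set (EuclideanSpace ℝ (Fin n)))
    (hKcomp : ∀ t > (0 : ℝ), ∀ j, IsCompact (K t j))
    (ψ : EuclideanSpace ℝ (Fin n) → ℝ → ℝ)
    (hψ : ∀ x, ∀ t > (0 : ℝ), ψ x t = ∑' j : ℕ, (K t j).indicator (fun _ => (1 : ℝ)) x)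
    (hub : ∀ x, ∀ t > (0 : ℝ), ψ x t ≤ Bn)
    (hzero : ∀ x, ∀ t > (0 : ℝ), M₁f x < t → ψ x t = 0)
    (hone : ∀ x, ∀ t > (0 : ℝ), t < f x → 1 ≤ ψ x t)
    (hbal : ∀ t > (0 : ℝ), ∫ x, t * ψ x t = ∫ x, ψ x t * f x) :
    ENNReal.ofReal (1 + 1 / ((p - 1) * Bn)) * ∫⁻ x, ENNReal.ofReal (f x ^ p)
      ≤ ∫⁻ x, ENNReal.ofReal (M₁f x ^ p) := by
  have hψm : ∀ t > 0, Measurable fun x => ψ x t := fun t ht => by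
    simp_rw [hψ _ t ht]
    exact Measurable.tsum fun j => measurable_const.indicator (hKcomp t ht j).measurableSet
  have hψ0 : ∀ t > 0, ∀ x, 0 ≤ ψ x t := fun t ht x => by
    rw [hψ x t ht]
    exact tsum_nonneg fun j => indicator_nonneg (fun _ _ => zero_le_one) x
  have hmax_rpow (x) : ENNReal.ofReal (max (M₁f x) 0 ^ p) ≤ ENNReal.ofReal (M₁f x ^ p) := by
    rcases le_total 0 (M₁f x) with h | h
    · rw [max_eq_left h]
    · simp [max_eq_right h, Real.zero_rpow (by linarith : p ≠ 0)]
  calc ENNReal.ofReal (1 + 1 / ((p - 1) * Bn)) * ∫⁻ x, ENNReal.ofReal (f x ^ p)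
      ≤ ∫⁻ x, ENNReal.ofReal (max (M₁f x) 0 ^ p) :=
        lintegral_rpow_le_of_level_ineq hp (by linarith) hf0 hfc.measurable
          (fun x => le_max_right _ _) (hMmeas.max measurable_const) fun t ht =>
          level_ineq_of_balance ht (by linarith) hf0 (hfc.integrable_of_hasCompactSupport hfsupp)
            (hψm t ht) (hMmeas.max measurable_const) (hψ0 t ht) (fun x => hub x t ht)
            (fun x hx => hzero x t ht (lt_of_le_of_lt (le_max_left _ _) hx))
            (hone · t ht) (hbal t ht)
    _ ≤ ∫⁻ x, ENNReal.ofReal (M₁f x ^ p) := lintegral_mono hmax_rpow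

/-- Section 2 estimate: if for every `t > 0` there is a countable family of convex
bodies `K_{t,j}` whose overlap function `ψ(x,t) = Σ_j 1_{K_{t,j}}(x)` satisfies
`ψ ≤ B(n)`, `ψ(x,t) = 0` for `t > M₁f(x)`, `ψ(x,t) ≥ 1` for `t < f(x)`, and
`∫ t ψ(·,t) = ∫ ψ(·,t) f`, then `‖M₁f‖_p^p ≥ (1 + 1/((p-1)B(n))) ‖f‖_p^p`. -/
theorem stmt_10 (n : ℕ) (hn : 1 ≤ n) (p : ℝ) (hp : 1 < p)
    (Bn : ℝ) (hBn : 1 ≤ Bn)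
    (f M₁f : EuclideanSpace ℝ (Fin n) → ℝ)
    (hfc : Continuous f) (hf0 : ∀ x, 0 ≤ f x) (hfsupp : HasCompactSupport f)
    (hMmeas : Measurable M₁f)
    (K : ℝ → ℕ → Set (EuclideanSpace ℝ (Fin n)))
    (hKconv : ∀ t > (0 : ℝ), ∀ j, Convex ℝ (K t j))
    (hKcomp : ∀ t > (0 : ℝ), ∀ j, IsCompact (K t j))
    (hKint : ∀ t > (0 : ℝ), ∀ j, (interior (K t j)).Nonempty)
    (ψ : EuclideanSpace ℝ (Fin n) → ℝ → ℝ)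
    (hψ : ∀ x, ∀ t > (0 : ℝ), ψ x t = ∑' j : ℕ, (K t j).indicator (fun _ => (1 : ℝ)) x)
    (hub : ∀ x, ∀ t > (0 : ℝ), ψ x t ≤ Bn)
    (hzero : ∀ x, ∀ t > (0 : ℝ), M₁f x < t → ψ x t = 0)
    (hone : ∀ x, ∀ t > (0 : ℝ), t < f x → 1 ≤ ψ x t)
    (hbal : ∀ t > (0 : ℝ), ∫ x, t * ψ x t = ∫ x, ψ x t * f x) :
    ENNReal.ofReal (1 + 1 / ((p - 1) * Bn)) * ∫⁻ x, ENNReal.ofReal (f x ^ p)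
      ≤ ∫⁻ x, ENNReal.ofReal (M₁f x ^ p) :=
  stmt_10_general n p hp Bn hBn f M₁f hfc hf0 hfsupp hMmeas K hKcomp ψ hψ hub hzero hone hbal
end

section
/- Let ψ : ℝⁿ × (0,∞) → [0, ∞) be measurable with ψ ≤ B for a constant B ≥ 1, let f, g : ℝⁿ → [0,∞) be measurable with g ≥ f, f ∈ L^p for p > 1, and g ∈ L^p. Assume ψ(x,t) = 0 for t > g(x), ψ(x,t) ≥ 1 for t < f(x), and ∫_{ℝⁿ} ∫_0^∞ t^{p-1} ψ(x,t) dt dx = ∫_{ℝⁿ} ∫_0^∞ t^{p-2} ψ(x,t) f(x) dt dx. Then (B/p)(‖g‖_p^p − ‖f‖_p^p) ≥ ‖f‖_p^p / (p(p−1)). -/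
/-!
Fix `x` and write `a = f x`, `b = g x`, `φ = ψ x`. The difference of the inner integrals in the
balance condition is `∫ t ^ (p - 2) * φ t * (a - t)` over `(0, b]`, since `φ` vanishes beyond `b`.
On `(0, a)` the factor `a - t` is positive and `φ ≥ 1`, so the integrand is at least
`t ^ (p - 2) * (a - t)`, whose integral is `a ^ p / (p * (p - 1))`; on `(a, b)` it is at least
`-B * t ^ (p - 1)`, whose integral is `-B / p * (b ^ p - a ^ p)`. Integrate this bound in `x`: by
the balance condition the integrated difference is zero.
-/

open MeasureTheory Set

section Profile

open intervalIntegral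

variable {r s B a b : ℝ} {φ : ℝ → ℝ}

lemma setIntegral_Ioi_zero_eq_intervalIntegral {F : ℝ → ℝ} (hb : 0 ≤ b)
    (hF : ∀ t > b, F t = 0) : ∫ t in Ioi 0, F t = ∫ t in 0..b, F t := by
  rw [integral_of_le hb]
  exact setIntegral_eq_of_subset_of_forall_sdiff_eq_zero measurableSet_Ioi Ioc_subset_Ioi_self
    fun t ht => hF t (not_le.mp fun h => ht.2 ⟨ht.1, h⟩)

lemma intervalIntegrable_rpow_mul (hr : -1 < r) (hb : 0 ≤ b) (hφm : Measurable φ)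
    (hφ0 : ∀ t > 0, 0 ≤ φ t) (hφB : ∀ t > 0, φ t ≤ B) :
    IntervalIntegrable (fun t => t ^ r * φ t) volume 0 b := by
  refine ((intervalIntegrable_rpow' hr).const_mul B).mono_fun'
    ((measurable_id.pow_const r).mul hφm).aestronglyMeasurable ?_
  rw [uIoc_of_le hb]
  filter_upwards [ae_restrict_mem measurableSet_Ioc] with t ht
  have htr : 0 ≤ t ^ r := Real.rpow_nonneg ht.1.le r
  rw [Real.norm_of_nonneg (mul_nonneg htr (hφ0 t ht.1)), mul_comm B]
  exact mul_le_mul_of_nonneg_left (hφB t ht.1) htr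

lemma setIntegral_rpow_mul_nonneg (hφ0 : ∀ t > 0, 0 ≤ φ t) :
    0 ≤ ∫ t in Ioi 0, t ^ r * φ t :=
  setIntegral_nonneg measurableSet_Ioi fun t ht =>
    mul_nonneg (Real.rpow_nonneg (le_of_lt ht) r) (hφ0 t ht)

lemma setIntegral_rpow_sub_one_mul_le (hs : 0 < s) (hb : 0 ≤ b) (hφm : Measurable φ)
    (hφ0 : ∀ t > 0, 0 ≤ φ t) (hφB : ∀ t > 0, φ t ≤ B) (hφz : ∀ t > 0, b < t → φ t = 0) :
    ∫ t in Ioi 0, t ^ (s - 1) * φ t ≤ B * b ^ s / s := by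
  rw [setIntegral_Ioi_zero_eq_intervalIntegral hb fun t ht => by
    simp [hφz t (hb.trans_lt ht) ht]]
  calc ∫ t in 0..b, t ^ (s - 1) * φ t
      ≤ ∫ t in 0..b, B * t ^ (s - 1) := by
        refine integral_mono_on_of_le_Ioo hb
          (intervalIntegrable_rpow_mul (by linarith) hb hφm hφ0 hφB)
          ((intervalIntegrable_rpow' (by linarith)).const_mul B) fun t ht => ?_
        rw [mul_comm B]
        exact mul_le_mul_of_nonneg_left (hφB t ht.1) (Real.rpow_nonneg ht.1.le _)
    _ = B * b ^ s / s := by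
        rw [intervalIntegral.integral_const_mul, integral_rpow (.inl (by linarith)),
          sub_add_cancel, Real.zero_rpow hs.ne', sub_zero, mul_div_assoc]

lemma rpow_sub_one_eq_rpow_sub_two_mul {t : ℝ} (ht : 0 < t) (p : ℝ) :
    t ^ (p - 1) = t ^ (p - 2) * t := by
  rw [← Real.rpow_add_one ht.ne']
  ring_nf

variable {p : ℝ}

lemma le_integral_rpow_sub_two_mul_sub_of_one_le (hp : 1 < p) (ha : 0 ≤ a)
    (hφ1 : ∀ t > 0, t < a → 1 ≤ φ t)
    (hG : IntervalIntegrable (fun t => t ^ (p - 2) * φ t * a - t ^ (p - 1) * φ t) volume 0 a) :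
    a ^ p / (p * (p - 1)) ≤ ∫ t in 0..a, (t ^ (p - 2) * φ t * a - t ^ (p - 1) * φ t) := by
  have hp2 : -1 < p - 2 := by linarith
  have hp0 : p ≠ 0 := by linarith
  have hp1 : p - 1 ≠ 0 := by linarith
  calc a ^ p / (p * (p - 1))
      = ∫ t in 0..a, (a * t ^ (p - 2) - t ^ (p - 1)) := by
        rw [integral_sub ((intervalIntegrable_rpow' hp2).const_mul a)
            (intervalIntegrable_rpow' (by linarith)), intervalIntegral.integral_const_mul,
          integral_rpow (.inl hp2), integral_rpow (.inl (by linarith)),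
          show p - 2 + 1 = p - 1 by ring, sub_add_cancel, Real.zero_rpow (by linarith),
          Real.zero_rpow (by linarith), sub_zero, sub_zero, ← mul_div_assoc,
          mul_comm a, ← Real.rpow_add_one' ha (by linarith), sub_add_cancel]
        field_simp
        ring
    _ ≤ _ := by
        refine integral_mono_on_of_le_Ioo ha (((intervalIntegrable_rpow' hp2).const_mul a).sub
          (intervalIntegrable_rpow' (by linarith))) hG fun t ht => ?_
        have htp : 0 ≤ t ^ (p - 2) := Real.rpow_nonneg ht.1.le _
        rw [rpow_sub_one_eq_rpow_sub_two_mul ht.1]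
        nlinarith [mul_nonneg (mul_nonneg htp (sub_nonneg.mpr ht.2.le))
          (sub_nonneg.mpr (hφ1 t ht.1 ht.2))]

lemma le_integral_rpow_sub_two_mul_sub_of_le (hp : 1 < p) (ha : 0 ≤ a) (hab : a ≤ b)
    (hφ0 : ∀ t > 0, 0 ≤ φ t) (hφB : ∀ t > 0, φ t ≤ B)
    (hG : IntervalIntegrable (fun t => t ^ (p - 2) * φ t * a - t ^ (p - 1) * φ t) volume a b) :
    -(B / p * (b ^ p - a ^ p)) ≤ ∫ t in a..b, (t ^ (p - 2) * φ t * a - t ^ (p - 1) * φ t) := by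
  calc -(B / p * (b ^ p - a ^ p))
      = ∫ t in a..b, -(B * t ^ (p - 1)) := by
        rw [intervalIntegral.integral_neg, intervalIntegral.integral_const_mul,
          integral_rpow (.inl (by linarith)), sub_add_cancel]
        ring
    _ ≤ _ := by
        refine integral_mono_on_of_le_Ioo hab ((intervalIntegrable_rpow' (by linarith)).const_mul
          B).neg hG fun t ht => ?_
        have ht0 : 0 < t := ha.trans_lt ht.1
        nlinarith [mul_nonneg (mul_nonneg (Real.rpow_nonneg ht0.le (p - 2)) (hφ0 t ht0)) ha,
          mul_le_mul_of_nonneg_left (hφB t ht0) (Real.rpow_nonneg ht0.le (p - 1))]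

lemma le_setIntegral_rpow_sub_two_mul_sub (hp : 1 < p) (ha : 0 ≤ a) (hab : a ≤ b)
    (hφm : Measurable φ) (hφ0 : ∀ t > 0, 0 ≤ φ t) (hφB : ∀ t > 0, φ t ≤ B)
    (hφz : ∀ t > 0, b < t → φ t = 0) (hφ1 : ∀ t > 0, t < a → 1 ≤ φ t) :
    a ^ p / (p * (p - 1)) - B / p * (b ^ p - a ^ p)
      ≤ (∫ t in Ioi 0, t ^ (p - 2) * φ t * a) - ∫ t in Ioi 0, t ^ (p - 1) * φ t := by
  have hb : 0 ≤ b := ha.trans hab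
  have hvanish : ∀ (r c : ℝ), ∀ t > b, t ^ r * φ t * c = 0 := fun r c t ht => by
    simp [hφz t (hb.trans_lt ht) ht]
  have hG : IntervalIntegrable (fun t => t ^ (p - 2) * φ t * a - t ^ (p - 1) * φ t) volume 0 b :=
    ((intervalIntegrable_rpow_mul (by linarith) hb hφm hφ0 hφB).mul_const a).sub
      (intervalIntegrable_rpow_mul (by linarith) hb hφm hφ0 hφB)
  have hmid : a ∈ uIcc 0 b := by rw [uIcc_of_le hb]; exact ⟨ha, hab⟩
  rw [setIntegral_Ioi_zero_eq_intervalIntegral hb (hvanish (p - 2) a),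
    setIntegral_Ioi_zero_eq_intervalIntegral hb fun t ht => by simpa using hvanish (p - 1) 1 t ht,
    ← integral_sub (((intervalIntegrable_rpow_mul (by linarith) hb hφm hφ0 hφB).mul_const a))
      (intervalIntegrable_rpow_mul (by linarith) hb hφm hφ0 hφB),
    ← integral_add_adjacent_intervals (hG.mono_set (uIcc_subset_uIcc left_mem_uIcc hmid))
      (hG.mono_set (uIcc_subset_uIcc hmid right_mem_uIcc))]
  linarith [le_integral_rpow_sub_two_mul_sub_of_one_le hp ha hφ1
      (hG.mono_set (uIcc_subset_uIcc left_mem_uIcc hmid)),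
    le_integral_rpow_sub_two_mul_sub_of_le hp ha hab hφ0 hφB
      (hG.mono_set (uIcc_subset_uIcc hmid right_mem_uIcc))]

lemma setIntegral_rpow_sub_two_mul_mul_le (hp : 1 < p) (ha : 0 ≤ a) (hab : a ≤ b)
    (hφm : Measurable φ) (hφ0 : ∀ t > 0, 0 ≤ φ t) (hφB : ∀ t > 0, φ t ≤ B)
    (hφz : ∀ t > 0, b < t → φ t = 0) :
    ∫ t in Ioi 0, t ^ (p - 2) * φ t * a ≤ B * b ^ p / (p - 1) := by
  have hb : 0 ≤ b := ha.trans hab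
  have hI := setIntegral_rpow_sub_one_mul_le (s := p - 1) (by linarith) hb hφm hφ0 hφB hφz
  rw [show p - 1 - 1 = p - 2 by ring] at hI
  calc ∫ t in Ioi 0, t ^ (p - 2) * φ t * a
      = (∫ t in Ioi 0, t ^ (p - 2) * φ t) * a := MeasureTheory.integral_mul_const _ _
    _ ≤ B * b ^ (p - 1) / (p - 1) * b :=
        mul_le_mul hI hab ha ((setIntegral_rpow_mul_nonneg hφ0).trans hI)
    _ = B * b ^ p / (p - 1) := by
        rw [div_mul_eq_mul_div, mul_assoc, ← Real.rpow_add_one' hb (by linarith), sub_add_cancel]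

end Profile

section Fibrewise

variable {α : Type*} [MeasurableSpace α] {μ : Measure α} {ψ : α → ℝ → ℝ} {f g : α → ℝ}
  {p s B : ℝ}

lemma MeasureTheory.MemLp.integrable_rpow_of_nonneg (hp : 0 < p)
    (hf : MemLp f (ENNReal.ofReal p) μ) (hf0 : ∀ x, 0 ≤ f x) : Integrable (fun x => f x ^ p) μ := by
  simpa [ENNReal.toReal_ofReal hp.le, Real.norm_of_nonneg (hf0 _)] using
    hf.integrable_norm_rpow (by simpa using hp) ENNReal.ofReal_ne_top

lemma stronglyMeasurable_setIntegral_rpow_mul (hψ : Measurable fun q : α × ℝ => ψ q.1 q.2)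
    (r : ℝ) : StronglyMeasurable fun x => ∫ t in Ioi 0, t ^ r * ψ x t :=
  StronglyMeasurable.integral_prod_right' (f := fun q : α × ℝ => q.2 ^ r * ψ q.1 q.2)
    ((measurable_snd.pow_const r).mul hψ).stronglyMeasurable

lemma integrable_setIntegral_rpow_sub_one_mul (hs : 0 < s)
    (hψ : Measurable fun q : α × ℝ => ψ q.1 q.2) (hψ0 : ∀ x, ∀ t > 0, 0 ≤ ψ x t)
    (hψB : ∀ x, ∀ t > 0, ψ x t ≤ B) (hψz : ∀ x, ∀ t > 0, g x < t → ψ x t = 0)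
    (hg0 : ∀ x, 0 ≤ g x) (hg : Integrable (fun x => g x ^ s) μ) :
    Integrable (fun x => ∫ t in Ioi 0, t ^ (s - 1) * ψ x t) μ :=
  integrable_of_le_of_le (stronglyMeasurable_setIntegral_rpow_mul hψ _).aestronglyMeasurable
    (ae_of_all _ fun x => setIntegral_rpow_mul_nonneg (hψ0 x))
    (ae_of_all _ fun x => setIntegral_rpow_sub_one_mul_le hs (hg0 x)
      (hψ.comp measurable_prodMk_left) (hψ0 x) (hψB x) (hψz x))
    (integrable_zero _ _ _) ((hg.const_mul B).div_const s)

lemma integrable_setIntegral_rpow_sub_two_mul_mul (hp : 1 < p)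
    (hψ : Measurable fun q : α × ℝ => ψ q.1 q.2) (hψ0 : ∀ x, ∀ t > 0, 0 ≤ ψ x t)
    (hψB : ∀ x, ∀ t > 0, ψ x t ≤ B) (hψz : ∀ x, ∀ t > 0, g x < t → ψ x t = 0)
    (hf0 : ∀ x, 0 ≤ f x) (hfg : ∀ x, f x ≤ g x) (hfm : AEStronglyMeasurable f μ)
    (hg : Integrable (fun x => g x ^ p) μ) :
    Integrable (fun x => ∫ t in Ioi 0, t ^ (p - 2) * ψ x t * f x) μ := by
  have hm : AEStronglyMeasurable (fun x => ∫ t in Ioi 0, t ^ (p - 2) * ψ x t * f x) μ := by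
    simp_rw [integral_mul_const]
    exact (stronglyMeasurable_setIntegral_rpow_mul hψ _).aestronglyMeasurable.mul hfm
  exact integrable_of_le_of_le hm
    (ae_of_all _ fun x => setIntegral_nonneg measurableSet_Ioi fun t ht =>
      mul_nonneg (mul_nonneg (Real.rpow_nonneg (le_of_lt ht) _) (hψ0 x t ht)) (hf0 x))
    (ae_of_all _ fun x => setIntegral_rpow_sub_two_mul_mul_le hp (hf0 x) (hfg x)
      (hψ.comp measurable_prodMk_left) (hψ0 x) (hψB x) (hψz x))
    (integrable_zero _ _ _) ((hg.const_mul B).div_const (p - 1))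

end Fibrewise

theorem stmt_11_general (n : ℕ) (p : ℝ) (hp : 1 < p) (B : ℝ)
    (ψ : EuclideanSpace ℝ (Fin n) → ℝ → ℝ)
    (hψmeas : Measurable (fun q : EuclideanSpace ℝ (Fin n) × ℝ => ψ q.1 q.2))
    (hψ0 : ∀ x, ∀ t > (0 : ℝ), 0 ≤ ψ x t)
    (hub : ∀ x, ∀ t > (0 : ℝ), ψ x t ≤ B)
    (f g : EuclideanSpace ℝ (Fin n) → ℝ)
    (hf0 : ∀ x, 0 ≤ f x) (hfg : ∀ x, f x ≤ g x)
    (hfLp : MemLp f (ENNReal.ofReal p)) (hgLp : MemLp g (ENNReal.ofReal p))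
    (hzero : ∀ x, ∀ t > (0 : ℝ), g x < t → ψ x t = 0)
    (hone : ∀ x, ∀ t > (0 : ℝ), t < f x → 1 ≤ ψ x t)
    (hbal : ∫ x, ∫ t in Set.Ioi (0 : ℝ), t ^ (p - 1) * ψ x t
          = ∫ x, ∫ t in Set.Ioi (0 : ℝ), t ^ (p - 2) * ψ x t * f x) :
    (∫ x, f x ^ p) / (p * (p - 1)) ≤ (B / p) * ((∫ x, g x ^ p) - ∫ x, f x ^ p) := by
  have hp0 : 0 < p := by linarith
  have hg0 : ∀ x, 0 ≤ g x := fun x => (hf0 x).trans (hfg x)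
  have hfp := hfLp.integrable_rpow_of_nonneg hp0 hf0
  have hgp := hgLp.integrable_rpow_of_nonneg hp0 hg0
  have hA := integrable_setIntegral_rpow_sub_one_mul hp0 hψmeas hψ0 hub hzero hg0 hgp
  have hC := integrable_setIntegral_rpow_sub_two_mul_mul hp hψmeas hψ0 hub hzero hf0 hfg
    hfLp.aestronglyMeasurable hgp
  have hdiff : Integrable (fun x => g x ^ p - f x ^ p) := hgp.sub hfp
  have hkey := integral_mono ((hfp.div_const _).sub (hdiff.const_mul (B / p))) (hC.sub hA)
    fun x => le_setIntegral_rpow_sub_two_mul_sub hp (hf0 x) (hfg x)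
      (hψmeas.comp measurable_prodMk_left) (hψ0 x) (hub x) (hzero x) (hone x)
  simp only [Pi.sub_apply] at hkey
  rw [integral_sub hC hA, ← hbal, sub_self, integral_sub (hfp.div_const _)
    (hdiff.const_mul _), integral_div, integral_const_mul, integral_sub hgp hfp] at hkey
  linarith

/-- Abstract core computation of Section 2: if `ψ ≤ B`, `ψ(x,t) = 0` for `t > g(x)`,
`ψ(x,t) ≥ 1` for `t < f(x)`, `f ≤ g`, and
`∫∫ t^{p-1} ψ = ∫∫ t^{p-2} ψ f`, then `(B/p)(‖g‖_p^p − ‖f‖_p^p) ≥ ‖f‖_p^p/(p(p−1))`. -/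
theorem stmt_11 (n : ℕ) (p : ℝ) (hp : 1 < p) (B : ℝ) (hB : 1 ≤ B)
    (ψ : EuclideanSpace ℝ (Fin n) → ℝ → ℝ)
    (hψmeas : Measurable (fun q : EuclideanSpace ℝ (Fin n) × ℝ => ψ q.1 q.2))
    (hψ0 : ∀ x, ∀ t > (0 : ℝ), 0 ≤ ψ x t)
    (hub : ∀ x, ∀ t > (0 : ℝ), ψ x t ≤ B)
    (f g : EuclideanSpace ℝ (Fin n) → ℝ)
    (hf0 : ∀ x, 0 ≤ f x) (hfg : ∀ x, f x ≤ g x)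
    (hfmeas : Measurable f) (hgmeas : Measurable g)
    (hfLp : MemLp f (ENNReal.ofReal p)) (hgLp : MemLp g (ENNReal.ofReal p))
    (hzero : ∀ x, ∀ t > (0 : ℝ), g x < t → ψ x t = 0)
    (hone : ∀ x, ∀ t > (0 : ℝ), t < f x → 1 ≤ ψ x t)
    (hbal : ∫ x, ∫ t in Set.Ioi (0 : ℝ), t ^ (p - 1) * ψ x t
          = ∫ x, ∫ t in Set.Ioi (0 : ℝ), t ^ (p - 2) * ψ x t * f x) :
    (∫ x, f x ^ p) / (p * (p - 1)) ≤ (B / p) * ((∫ x, g x ^ p) - ∫ x, f x ^ p) :=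
  stmt_11_general n p hp B ψ hψmeas hψ0 hub f g hf0 hfg hfLp hgLp hzero hone hbal
end
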